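/- arXiv:1805.01256 — 8 statements merged into one kernel-verified Lean document; each statement's English description precedes it below -/
import Mathlib

section
/- Let ω be a radial weight on the unit disc with ω̂(r) = ∫_r^1 ω(s) ds > 0 for all 0 ≤ r < 1. Then ω satisfies the doubling condition ω̂(r) ≤ C·ω̂((1+r)/2) for some C > 1 and all 0 ≤ r < 1 if and only if there exist constants C' > 0 and β > 0 such that ω̂(r) ≤ C'·((1-r)/(1-t))^β · ω̂(t) for all 0 ≤ r ≤ t < 1. -/
open MeasureTheory Set

/-- `what ω r = ∫_r^1 ω(s) ds`. -/
noncomputable def what (ω : ℝ → ℝ) (r : ℝ) : ℝ := ∫ s in r..(1:ℝ), ω s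

lemma aux_intInt (ω : ℝ → ℝ) (hint : IntegrableOn ω (Set.Ico (0:ℝ) 1))
    {a b : ℝ} (ha : 0 ≤ a) (hab : a ≤ b) (hb : b ≤ 1) :
    IntervalIntegrable ω volume a b := by
  rw [intervalIntegrable_iff, Set.uIoc_of_le hab]
  have h1 : IntegrableOn ω (Set.Ioo a b) :=
    hint.mono_set (fun x hx => ⟨le_trans ha hx.1.le, lt_of_lt_of_le hx.2 hb⟩)
  exact h1.congr_set_ae Ioo_ae_eq_Ioc.symm

lemma what_anti (ω : ℝ → ℝ) (hint : IntegrableOn ω (Set.Ico (0:ℝ) 1))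
    (hnn : ∀ r ∈ Set.Ico (0:ℝ) 1, 0 ≤ ω r)
    {r t : ℝ} (hr : 0 ≤ r) (hrt : r ≤ t) (ht : t < 1) :
    what ω t ≤ what ω r := by
  have h1 : IntervalIntegrable ω volume r t := aux_intInt ω hint hr hrt ht.le
  have h2 : IntervalIntegrable ω volume t 1 :=
    aux_intInt ω hint (le_trans hr hrt) ht.le le_rfl
  have hsplit : (∫ s in r..t, ω s) + what ω t = what ω r :=
    intervalIntegral.integral_add_adjacent_intervals h1 h2
  have hnonneg : 0 ≤ ∫ s in r..t, ω s := by
    apply intervalIntegral.integral_nonneg hrt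
    intro u hu
    exact hnn u ⟨le_trans hr hu.1, lt_of_le_of_lt hu.2 ht⟩
  linarith

lemma doubling_iter (ω : ℝ → ℝ) {C : ℝ} (hC : 0 < C)
    (h : ∀ r ∈ Set.Ico (0:ℝ) 1, what ω r ≤ C * what ω ((1 + r) / 2)) :
    ∀ n : ℕ, ∀ r ∈ Set.Ico (0:ℝ) 1,
      what ω r ≤ C ^ n * what ω (1 - (1 - r) / 2 ^ n) := by
  intro n
  induction n with
  | zero => intro r hr; simp
  | succ n ih =>
    rintro r ⟨hr0, hr1⟩
    have h2n : (0:ℝ) < 2 ^ n := by positivity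
    have h1le : (1:ℝ) ≤ 2 ^ n := one_le_pow₀ (by norm_num)
    have hrnmem : 1 - (1 - r) / 2 ^ n ∈ Set.Ico (0:ℝ) 1 := by
      constructor
      · have h1 : (1 - r) / 2 ^ n ≤ 1 - r := div_le_self (by linarith) h1le
        linarith
      · have : 0 < (1 - r) / 2 ^ n := div_pos (by linarith) h2n
        linarith
    have hkey : (1 + (1 - (1 - r) / 2 ^ n)) / 2 = 1 - (1 - r) / 2 ^ (n + 1) := by
      field_simp; ring
    calc what ω r ≤ C ^ n * what ω (1 - (1 - r) / 2 ^ n) := ih r ⟨hr0, hr1⟩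
      _ ≤ C ^ n * (C * what ω ((1 + (1 - (1 - r) / 2 ^ n)) / 2)) := by
          apply mul_le_mul_of_nonneg_left (h _ hrnmem) (by positivity)
      _ = C ^ (n + 1) * what ω (1 - (1 - r) / 2 ^ (n + 1)) := by
          rw [hkey]; ring

theorem stmt_0 (ω : ℝ → ℝ)
    (hint : IntegrableOn ω (Set.Ico (0:ℝ) 1))
    (hnn : ∀ r ∈ Set.Ico (0:ℝ) 1, 0 ≤ ω r)
    (hpos : ∀ r ∈ Set.Ico (0:ℝ) 1, 0 < what ω r) :
    (∃ C : ℝ, 1 < C ∧ ∀ r ∈ Set.Ico (0:ℝ) 1, what ω r ≤ C * what ω ((1 + r) / 2)) ↔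
    (∃ C' β : ℝ, 0 < C' ∧ 0 < β ∧ ∀ r t : ℝ, 0 ≤ r → r ≤ t → t < 1 →
      what ω r ≤ C' * ((1 - r) / (1 - t)) ^ β * what ω t) := by
  constructor
  · rintro ⟨C, hC1, hC⟩
    have hC0 : 0 < C := by linarith
    refine ⟨C, Real.logb 2 C, hC0, Real.logb_pos (by norm_num) hC1, ?_⟩
    intro r t hr hrt ht
    set β := Real.logb 2 C with hβ
    have hβ0 : 0 < β := Real.logb_pos (by norm_num) hC1
    set x : ℝ := (1 - r) / (1 - t) with hx
    have ht0 : (0:ℝ) < 1 - t := by linarith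
    have hx1 : 1 ≤ x := (one_le_div ht0).mpr (by linarith)
    have hx0 : 0 < x := lt_of_lt_of_le one_pos hx1
    set n : ℕ := ⌈Real.logb 2 x⌉₊ with hn
    have hlogb0 : 0 ≤ Real.logb 2 x := Real.logb_nonneg (by norm_num) hx1
    have hxle : x ≤ 2 ^ n := by
      have h1 : x = (2:ℝ) ^ (Real.logb 2 x) := (Real.rpow_logb (by norm_num) (by norm_num) hx0).symm
      have h2 : (2:ℝ) ^ (Real.logb 2 x) ≤ (2:ℝ) ^ (n:ℝ) :=
        Real.rpow_le_rpow_of_exponent_le (by norm_num) (Nat.le_ceil _)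
      rw [Real.rpow_natCast] at h2
      linarith
    have hle2x : (2:ℝ) ^ n ≤ 2 * x := by
      have h1 : (n:ℝ) < Real.logb 2 x + 1 := Nat.ceil_lt_add_one hlogb0
      have h2 : (2:ℝ) ^ (n:ℝ) ≤ (2:ℝ) ^ (Real.logb 2 x + 1) :=
        Real.rpow_le_rpow_of_exponent_le (by norm_num) h1.le
      rw [Real.rpow_natCast, Real.rpow_add (by norm_num), Real.rpow_logb (by norm_num) (by norm_num) hx0,
        Real.rpow_one] at h2
      linarith
    have h2n : (0:ℝ) < 2 ^ n := by positivity
    have hrnt : t ≤ 1 - (1 - r) / 2 ^ n := by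
      have h5 : (1 - r) / 2 ^ n ≤ 1 - t := by
        rw [div_le_iff₀ h2n]
        calc 1 - r = x * (1 - t) := (div_mul_cancel₀ _ ht0.ne').symm
          _ ≤ 2 ^ n * (1 - t) := mul_le_mul_of_nonneg_right hxle ht0.le
          _ = (1 - t) * 2 ^ n := mul_comm _ _
      linarith
    have hrn1 : 1 - (1 - r) / 2 ^ n < 1 := by
      have h6 : 0 < (1 - r) / 2 ^ n := div_pos (by linarith) h2n
      linarith
    have hrmem : r ∈ Set.Ico (0:ℝ) 1 := ⟨hr, by linarith⟩
    have hstep1 : what ω r ≤ C ^ n * what ω (1 - (1 - r) / 2 ^ n) :=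
      doubling_iter ω hC0 hC n r hrmem
    have hstep2 : what ω (1 - (1 - r) / 2 ^ n) ≤ what ω t :=
      what_anti ω hint hnn (by linarith) hrnt hrn1
    have hCn : C ^ n ≤ C * x ^ β := by
      have hCeq : C = (2:ℝ) ^ β := (Real.rpow_logb (by norm_num) (by norm_num) hC0).symm
      have h1 : C ^ n = ((2:ℝ) ^ (n:ℝ)) ^ β := by
        rw [hCeq, ← Real.rpow_natCast ((2:ℝ) ^ β) n, ← Real.rpow_mul (by norm_num),
          ← Real.rpow_mul (by norm_num), mul_comm]
      have h2 : ((2:ℝ) ^ (n:ℝ)) ^ β ≤ (2 * x) ^ β := by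
        apply Real.rpow_le_rpow (by positivity) _ hβ0.le
        rw [Real.rpow_natCast]; exact hle2x
      have h3 : (2 * x) ^ β = C * x ^ β := by
        rw [Real.mul_rpow (by norm_num) hx0.le, ← hCeq]
      rw [h1, ← h3]; exact h2
    have hwt : 0 < what ω t := hpos t ⟨by linarith, ht⟩
    calc what ω r ≤ C ^ n * what ω (1 - (1 - r) / 2 ^ n) := hstep1
      _ ≤ C ^ n * what ω t := mul_le_mul_of_nonneg_left hstep2 (by positivity)
      _ ≤ (C * x ^ β) * what ω t := mul_le_mul_of_nonneg_right hCn hwt.le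
      _ = C * x ^ β * what ω t := by ring
  · rintro ⟨C', β, hC', hβ, h⟩
    refine ⟨max (C' * 2 ^ β) 2, lt_of_lt_of_le one_lt_two (le_max_right _ _), ?_⟩
    intro r hr
    have ht1 : (1 + r) / 2 < 1 := by linarith [hr.2]
    have hrt : r ≤ (1 + r) / 2 := by linarith [hr.1]
    have hx : (1 - r) / (1 - (1 + r) / 2) = 2 := by
      have h1r : (1:ℝ) - r ≠ 0 := by intro hh; linarith [hr.2]
      have h7 : 1 - (1 + r) / 2 = (1 - r) / 2 := by ring
      rw [h7, div_div_eq_mul_div, mul_comm, mul_div_assoc, div_self h1r, mul_one]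
    have := h r ((1 + r) / 2) hr.1 hrt ht1
    rw [hx] at this
    have hwt : 0 < what ω ((1 + r) / 2) := hpos _ ⟨by linarith [hr.1], ht1⟩
    calc what ω r ≤ C' * 2 ^ β * what ω ((1 + r) / 2) := this
      _ ≤ max (C' * 2 ^ β) 2 * what ω ((1 + r) / 2) :=
          mul_le_mul_of_nonneg_right (le_max_left _ _) hwt.le
end

section
/- Let ω be a radial weight with ω̂(r) = ∫_r^1 ω(s) ds > 0 for all 0 ≤ r < 1. If there exist C > 0 and β > 0 with ω̂(r) ≤ C·((1-r)/(1-t))^β · ω̂(t) for all 0 ≤ r ≤ t < 1, then there exists C' > 0 such that the moments ω_x = ∫_0^1 s^x ω(s) ds satisfy ω_x ≤ C'·ω̂(1 - 1/x) for all x ∈ [1,∞). -/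
/-!
Cut `[0, 1]` at the points `r k = max 0 (1 - k / x)`, `k = 0, …, ⌈x⌉`. On `[r (k+1), r k]` we
have `s ^ x ≤ (r k) ^ x ≤ exp (-k)`, while the mass of `ω` there is at most
`ω̂ (r (k+1)) ≤ C (k+1) ^ β ω̂ (1 - 1/x)` by the doubling condition, because
`1 - r (k+1) ≤ (k+1) / x`. Summing over `k`, `ω_x ≤ C (∑ (k+1) ^ β exp (-k)) ω̂ (1 - 1/x)`, and
the series converges.
-/

open MeasureTheory Set

open Real Finset intervalIntegral

lemma summable_add_one_rpow_mul_exp_neg (β : ℝ) :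
    Summable fun k : ℕ => ((k : ℝ) + 1) ^ β * exp (-k) := by
  have hpow : Summable fun k : ℕ => ((k + 1 : ℕ) : ℝ) ^ ⌈β⌉₊ * exp (-1 * (k + 1 : ℕ)) :=
    (summable_nat_add_iff 1).2 (summable_pow_mul_exp_neg_nat_mul ⌈β⌉₊ one_pos)
  refine (hpow.mul_left (exp 1)).of_nonneg_of_le (fun k => by positivity) fun k => ?_
  calc ((k : ℝ) + 1) ^ β * exp (-k)
      ≤ ((k : ℝ) + 1) ^ (⌈β⌉₊ : ℝ) * exp (-k) := by
        gcongr
        · simp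
        · exact Nat.le_ceil β
    _ = exp 1 * (((k + 1 : ℕ) : ℝ) ^ ⌈β⌉₊ * exp (-1 * (k + 1 : ℕ))) := by
        rw [rpow_natCast, mul_left_comm, ← exp_add]
        push_cast
        ring_nf

lemma intervalIntegrable_of_integrableOn_Ico {f : ℝ → ℝ} {c d a b : ℝ}
    (hf : IntegrableOn f (Ico c d)) (ha : a ∈ Icc c d) (hb : b ∈ Icc c d) :
    IntervalIntegrable f volume a b :=
  (((integrableOn_Icc_iff_integrableOn_Ico).2 hf).mono_set
    (uIcc_subset_Icc ha hb)).intervalIntegrable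

lemma intervalIntegrable_rpow_mul {ω : ℝ → ℝ} {a b x : ℝ} (hx : 0 ≤ x)
    (hω : IntervalIntegrable ω volume a b) :
    IntervalIntegrable (fun s => s ^ x * ω s) volume a b :=
  hω.continuousOn_mul (continuous_rpow_const hx).continuousOn

lemma integral_rpow_mul_le {ω : ℝ → ℝ} {a b x : ℝ} (ha : 0 ≤ a) (hab : a ≤ b) (hx : 0 ≤ x)
    (hω : IntervalIntegrable ω volume a b) (hnn : ∀ s ∈ Ico a b, 0 ≤ ω s) :
    ∫ s in a..b, s ^ x * ω s ≤ b ^ x * ∫ s in a..b, ω s := by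
  rw [← intervalIntegral.integral_const_mul]
  refine integral_mono_on hab (intervalIntegrable_rpow_mul hx hω) (hω.const_mul _) fun s hs => ?_
  rcases hs.2.eq_or_lt with rfl | hsb
  · rfl
  · exact mul_le_mul_of_nonneg_right (rpow_le_rpow (ha.trans hs.1) hs.2 hx) (hnn s ⟨hs.1, hsb⟩)

section Weight

variable {ω : ℝ → ℝ}

lemma what_nonneg (hnn : ∀ r ∈ Ico (0:ℝ) 1, 0 ≤ ω r) {a : ℝ} (ha : 0 ≤ a) (ha1 : a ≤ 1) :
    0 ≤ what ω a := by
  rw [what, integral_of_le ha1, integral_Ioc_eq_integral_Ioo]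
  exact setIntegral_nonneg measurableSet_Ioo fun s hs => hnn s ⟨ha.trans hs.1.le, hs.2⟩

lemma integral_le_what (hint : IntegrableOn ω (Ico (0:ℝ) 1))
    (hnn : ∀ r ∈ Ico (0:ℝ) 1, 0 ≤ ω r) {a b : ℝ} (ha : 0 ≤ a) (hab : a ≤ b) (hb : b ≤ 1) :
    ∫ s in a..b, ω s ≤ what ω a := by
  have hb1 := what_nonneg hnn (ha.trans hab) hb
  unfold what at hb1 ⊢
  rw [← integral_add_adjacent_intervals
    (intervalIntegrable_of_integrableOn_Ico hint ⟨ha, hab.trans hb⟩ ⟨ha.trans hab, hb⟩)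
    (intervalIntegrable_of_integrableOn_Ico hint ⟨ha.trans hab, hb⟩ ⟨zero_le_one, le_rfl⟩)]
  linarith

end Weight

noncomputable def gridPoint (x : ℝ) (k : ℕ) : ℝ := max 0 (1 - k / x)

section GridPoint

variable {x : ℝ}

@[simp]
lemma gridPoint_zero (x : ℝ) : gridPoint x 0 = 1 := by simp [gridPoint]

lemma gridPoint_nonneg (x : ℝ) (k : ℕ) : 0 ≤ gridPoint x k := le_max_left _ _

lemma gridPoint_mem_Icc (hx : 0 ≤ x) (k : ℕ) : gridPoint x k ∈ Set.Icc 0 1 :=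
  ⟨gridPoint_nonneg x k, max_le zero_le_one (sub_le_self _ (by positivity))⟩

lemma gridPoint_antitone (hx : 0 ≤ x) : Antitone (gridPoint x) :=
  antitone_nat_of_succ_le fun k => max_le_max le_rfl (by gcongr; simp)

lemma gridPoint_one (hx : 1 ≤ x) : gridPoint x 1 = 1 - 1 / x := by
  simp [gridPoint, inv_le_one_of_one_le₀ hx]

lemma gridPoint_ceil (hx : 0 < x) : gridPoint x ⌈x⌉₊ = 0 :=
  max_eq_left (by rw [sub_nonpos, one_le_div hx]; exact Nat.le_ceil x)

lemma one_sub_gridPoint_le (k : ℕ) : 1 - gridPoint x k ≤ k / x := by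
  unfold gridPoint
  linarith [le_max_right 0 (1 - k / x)]

lemma gridPoint_rpow_le_exp (hx : 0 < x) (k : ℕ) : gridPoint x k ^ x ≤ exp (-k) := by
  have hexp : gridPoint x k ≤ exp (-(k / x)) :=
    max_le (exp_pos _).le (by linarith [add_one_le_exp (-(k / x))])
  calc gridPoint x k ^ x ≤ exp (-(k / x)) ^ x := rpow_le_rpow (gridPoint_nonneg x k) hexp hx.le
    _ = exp (-k) := by rw [← exp_mul]; field_simp

lemma integral_eq_sum_integral_gridPoint {f : ℝ → ℝ} (hx : 0 < x)
    (hf : ∀ k : ℕ, IntervalIntegrable f volume (gridPoint x (k + 1)) (gridPoint x k)) :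
    ∫ s in (0:ℝ)..1, f s =
      ∑ k ∈ range ⌈x⌉₊, ∫ s in gridPoint x (k + 1)..gridPoint x k, f s := by
  have h := sum_integral_adjacent_intervals (f := f) (μ := volume) (a := gridPoint x)
    (n := ⌈x⌉₊) fun k _ => (hf k).symm
  rw [gridPoint_zero, gridPoint_ceil hx] at h
  rw [integral_symm, ← h, ← sum_neg_distrib]
  exact sum_congr rfl fun k _ => (integral_symm _ _).symm

end GridPoint

section Doubling

variable {ω : ℝ → ℝ} {C β x : ℝ}

lemma what_gridPoint_succ_le (hnn : ∀ r ∈ Ico (0:ℝ) 1, 0 ≤ ω r) (hC : 0 ≤ C) (hβ : 0 ≤ β)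
    (hDD : ∀ r t : ℝ, 0 ≤ r → r ≤ t → t < 1 →
      what ω r ≤ C * ((1 - r) / (1 - t)) ^ β * what ω t)
    (hx : 1 ≤ x) (k : ℕ) :
    what ω (gridPoint x (k + 1)) ≤ C * ((k : ℝ) + 1) ^ β * what ω (1 - 1 / x) := by
  have hx0 : 0 < x := by linarith
  have hinv : 0 < 1 / x := by positivity
  have hle : gridPoint x (k + 1) ≤ 1 - 1 / x :=
    gridPoint_one hx ▸ gridPoint_antitone hx0.le (by omega : 1 ≤ k + 1)
  have hratio : (1 - gridPoint x (k + 1)) / (1 - (1 - 1 / x)) ≤ (k : ℝ) + 1 := by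
    rw [sub_sub_cancel, div_le_iff₀ hinv]
    have := one_sub_gridPoint_le (x := x) (k + 1)
    push_cast at this
    linarith [div_eq_mul_one_div ((k : ℝ) + 1) x]
  calc what ω (gridPoint x (k + 1))
      ≤ C * ((1 - gridPoint x (k + 1)) / (1 - (1 - 1 / x))) ^ β * what ω (1 - 1 / x) :=
        hDD _ _ (gridPoint_nonneg x _) hle (by linarith)
    _ ≤ C * ((k : ℝ) + 1) ^ β * what ω (1 - 1 / x) := by
        have ht := gridPoint_one hx ▸ gridPoint_mem_Icc hx0.le 1
        have := (gridPoint_mem_Icc hx0.le (k + 1)).2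
        gcongr
        · exact what_nonneg hnn ht.1 ht.2
        · exact div_nonneg (by linarith) (by linarith)

lemma integral_gridPoint_le (hint : IntegrableOn ω (Ico (0:ℝ) 1))
    (hnn : ∀ r ∈ Ico (0:ℝ) 1, 0 ≤ ω r) (hC : 0 ≤ C) (hβ : 0 ≤ β)
    (hDD : ∀ r t : ℝ, 0 ≤ r → r ≤ t → t < 1 →
      what ω r ≤ C * ((1 - r) / (1 - t)) ^ β * what ω t)
    (hx : 1 ≤ x) (k : ℕ) :
    ∫ s in gridPoint x (k + 1)..gridPoint x k, s ^ x * ω s ≤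
      C * (((k : ℝ) + 1) ^ β * exp (-k)) * what ω (1 - 1 / x) := by
  have hx0 : 0 < x := by linarith
  have hmem := gridPoint_mem_Icc hx0.le
  have hanti : gridPoint x (k + 1) ≤ gridPoint x k := gridPoint_antitone hx0.le k.le_succ
  calc ∫ s in gridPoint x (k + 1)..gridPoint x k, s ^ x * ω s
      ≤ gridPoint x k ^ x * ∫ s in gridPoint x (k + 1)..gridPoint x k, ω s :=
        integral_rpow_mul_le (hmem _).1 hanti hx0.le
          (intervalIntegrable_of_integrableOn_Ico hint (hmem _) (hmem _))
          fun s hs => hnn s ⟨(hmem _).1.trans hs.1, hs.2.trans_le (hmem _).2⟩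
    _ ≤ exp (-k) * what ω (gridPoint x (k + 1)) :=
        (mul_le_mul_of_nonneg_left (integral_le_what hint hnn (hmem _).1 hanti (hmem _).2)
          (rpow_nonneg (hmem _).1 _)).trans
        (mul_le_mul_of_nonneg_right (gridPoint_rpow_le_exp hx0 k)
          (what_nonneg hnn (hmem _).1 (hmem _).2))
    _ ≤ exp (-k) * (C * ((k : ℝ) + 1) ^ β * what ω (1 - 1 / x)) := by
        gcongr
        exact what_gridPoint_succ_le hnn hC hβ hDD hx k
    _ = C * (((k : ℝ) + 1) ^ β * exp (-k)) * what ω (1 - 1 / x) := by ring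

end Doubling

theorem stmt_1_general (ω : ℝ → ℝ)
    (hint : IntegrableOn ω (Set.Ico (0:ℝ) 1))
    (hnn : ∀ r ∈ Set.Ico (0:ℝ) 1, 0 ≤ ω r)
    (C β : ℝ) (hC : 0 < C) (hβ : 0 < β)
    (hDD : ∀ r t : ℝ, 0 ≤ r → r ≤ t → t < 1 →
      what ω r ≤ C * ((1 - r) / (1 - t)) ^ β * what ω t) :
    ∃ C' : ℝ, 0 < C' ∧ ∀ x : ℝ, 1 ≤ x →
      (∫ s in (0:ℝ)..1, s ^ x * ω s) ≤ C' * what ω (1 - 1 / x) := by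
  have hsum := summable_add_one_rpow_mul_exp_neg β
  refine ⟨C * ∑' k : ℕ, ((k : ℝ) + 1) ^ β * exp (-k),
    mul_pos hC (hsum.tsum_pos (fun _ => by positivity) 0 (by simp)), fun x hx => ?_⟩
  have hx0 : 0 < x := by linarith
  have hmem := gridPoint_mem_Icc hx0.le
  rw [integral_eq_sum_integral_gridPoint hx0 fun k => intervalIntegrable_rpow_mul hx0.le
    (intervalIntegrable_of_integrableOn_Ico hint (hmem _) (hmem _))]
  calc _ ≤ ∑ k ∈ range ⌈x⌉₊, C * (((k : ℝ) + 1) ^ β * exp (-k)) * what ω (1 - 1 / x) :=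
        sum_le_sum fun k _ => integral_gridPoint_le hint hnn hC.le hβ.le hDD hx k
    _ = C * (∑ k ∈ range ⌈x⌉₊, ((k : ℝ) + 1) ^ β * exp (-k)) * what ω (1 - 1 / x) := by
        rw [← sum_mul, ← mul_sum]
    _ ≤ C * (∑' k : ℕ, ((k : ℝ) + 1) ^ β * exp (-k)) * what ω (1 - 1 / x) := by
        have ht := gridPoint_one hx ▸ hmem 1
        gcongr
        · exact what_nonneg hnn ht.1 ht.2
        · exact hsum.sum_le_tsum _ fun _ _ => by positivity

theorem stmt_1 (ω : ℝ → ℝ)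
    (hint : IntegrableOn ω (Set.Ico (0:ℝ) 1))
    (hnn : ∀ r ∈ Set.Ico (0:ℝ) 1, 0 ≤ ω r)
    (hpos : ∀ r ∈ Set.Ico (0:ℝ) 1, 0 < what ω r)
    (C β : ℝ) (hC : 0 < C) (hβ : 0 < β)
    (hDD : ∀ r t : ℝ, 0 ≤ r → r ≤ t → t < 1 →
      what ω r ≤ C * ((1 - r) / (1 - t)) ^ β * what ω t) :
    ∃ C' : ℝ, 0 < C' ∧ ∀ x : ℝ, 1 ≤ x →
      (∫ s in (0:ℝ)..1, s ^ x * ω s) ≤ C' * what ω (1 - 1 / x) :=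
  stmt_1_general ω hint hnn C β hC hβ hDD
end

section
/- Let ω be a radial weight with ω̂(r) = ∫_r^1 ω(s) ds > 0 for all 0 ≤ r < 1. If there exists C > 0 such that ω_x = ∫_0^1 s^x ω(s) ds ≤ C·ω̂(1 - 1/x) for all x ∈ [1,∞), then ω belongs to the class D̂, i.e., there exists C' > 1 such that ω̂(r) ≤ C'·ω̂((1+r)/2) for all 0 ≤ r < 1. -/
open MeasureTheory Set

theorem stmt_2 (ω : ℝ → ℝ)
    (hint : IntegrableOn ω (Set.Ico (0:ℝ) 1))
    (hnn : ∀ r ∈ Set.Ico (0:ℝ) 1, 0 ≤ ω r)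
    (hpos : ∀ r ∈ Set.Ico (0:ℝ) 1, 0 < what ω r)
    (C : ℝ) (hC : 0 < C)
    (hmom : ∀ x : ℝ, 1 ≤ x → (∫ s in (0:ℝ)..1, s ^ x * ω s) ≤ C * what ω (1 - 1 / x)) :
    ∃ C' : ℝ, 1 < C' ∧ ∀ r ∈ Set.Ico (0:ℝ) 1, what ω r ≤ C' * what ω ((1 + r) / 2) := by
  have hI : IntegrableOn ω (Icc (0:ℝ) 1) := by
    rwa [integrableOn_Icc_iff_integrableOn_Ico]
  have hne1 : ∀ᵐ s : ℝ, s ≠ 1 := by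
    refine ae_iff.2 ?_
    simpa using Real.volume_singleton (a := (1:ℝ))
  have hII : ∀ a b : ℝ, 0 ≤ a → a ≤ b → b ≤ 1 → IntervalIntegrable ω volume a b := by
    intro a b ha hab hb
    apply IntegrableOn.intervalIntegrable
    rw [uIcc_of_le hab]
    exact hI.mono_set (Icc_subset_Icc ha hb)
  have hae : ∀ a b : ℝ, 0 ≤ a → b ≤ 1 → 0 ≤ᵐ[volume.restrict (Icc a b)] ω := by
    intro a b ha hb
    filter_upwards [ae_restrict_mem measurableSet_Icc, ae_restrict_of_ae hne1] with s hs hs1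
    exact hnn s ⟨le_trans ha hs.1, lt_of_le_of_ne (hs.2.trans hb) hs1⟩
  have wnn : ∀ a : ℝ, 0 ≤ a → a ≤ 1 → 0 ≤ what ω a := by
    intro a ha ha1
    exact intervalIntegral.integral_nonneg_of_ae_restrict ha1 (hae a 1 ha le_rfl)
  have hmono : ∀ a b : ℝ, 0 ≤ a → a ≤ b → b ≤ 1 → what ω b ≤ what ω a := by
    intro a b ha hab hb
    have h1 : (∫ s in a..b, ω s) + (∫ s in b..1, ω s) = ∫ s in a..1, ω s :=
      intervalIntegral.integral_add_adjacent_intervals (hII a b ha hab hb)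
        (hII b 1 (ha.trans hab) hb le_rfl)
    have h2 : 0 ≤ ∫ s in a..b, ω s :=
      intervalIntegral.integral_nonneg_of_ae_restrict hab (hae a b ha hb)
    unfold what
    linarith
  have h78 : (0:ℝ) < what ω (7/8) := hpos _ (by norm_num)
  have h0pos : (0:ℝ) < what ω 0 := hpos _ (by norm_num)
  set B : ℝ := max (16*C) (what ω 0 / what ω (7/8)) with hB
  have hBpos : 0 < B := lt_of_lt_of_le (by positivity) (le_max_left _ _)
  refine ⟨B + 1, by linarith, ?_⟩
  intro r hr
  obtain ⟨hr0, hr1⟩ := hr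
  have hw2nn : 0 ≤ what ω ((1+r)/2) := wnn _ (by linarith) (by linarith)
  rcases le_or_gt r (3/4) with hcase | hcase
  · -- small r case
    have h1 : what ω r ≤ what ω 0 := hmono 0 r le_rfl hr0 hr1.le
    have h2 : what ω (7/8) ≤ what ω ((1+r)/2) :=
      hmono ((1+r)/2) (7/8) (by linarith) (by linarith) (by norm_num)
    have hq : what ω 0 / what ω (7/8) ≤ B + 1 :=
      le_trans (le_max_right _ _) (by linarith)
    calc what ω r ≤ what ω 0 := h1
      _ = (what ω 0 / what ω (7/8)) * what ω (7/8) := (div_mul_cancel₀ _ h78.ne').symm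
      _ ≤ (B + 1) * what ω ((1+r)/2) :=
          mul_le_mul hq h2 h78.le (by linarith)
  · -- large r case
    set x : ℝ := 2 / (1 - r) with hxdef
    have hrpos : (0:ℝ) < r := by linarith
    have h1r : (0:ℝ) < 1 - r := by linarith
    have hx1 : (1:ℝ) ≤ x := by
      rw [hxdef, le_div_iff₀ h1r]; linarith
    have hxpos : (0:ℝ) < x := by linarith
    have hxe : 1 - 1 / x = (1 + r) / 2 := by
      rw [hxdef]
      field_simp
      ring
    have hm := hmom x hx1
    rw [hxe] at hm
    -- bound r ^ x from below by 1/16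
    have hlog : 1 - 1 / r ≤ Real.log r := by
      have h := Real.log_le_sub_one_of_pos (show (0:ℝ) < r⁻¹ by positivity)
      rw [Real.log_inv] at h
      have : r⁻¹ = 1 / r := (one_div r).symm
      linarith [h]
    have hxlog : -(8/3) ≤ Real.log r * x := by
      have h1 : (1 - 1/r) * x ≤ Real.log r * x :=
        mul_le_mul_of_nonneg_right hlog hxpos.le
      have h2 : (1 - 1/r) * x = -(2/r) := by
        rw [hxdef]; field_simp; ring
      have h3 : 2 / r ≤ 8/3 := by
        rw [div_le_div_iff₀ hrpos (by norm_num : (0:ℝ) < 3)]; linarith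
      linarith
    have hrx : (1/16 : ℝ) ≤ r ^ x := by
      rw [Real.rpow_def_of_pos hrpos]
      have h16 : (1/16:ℝ) = Real.exp (Real.log (1/16)) := (Real.exp_log (by norm_num)).symm
      rw [h16]
      apply Real.exp_le_exp.2
      have hl : Real.log (1/16 : ℝ) = -(4 * Real.log 2) := by
        rw [one_div, Real.log_inv, show (16:ℝ) = 2^4 by norm_num, Real.log_pow]
        push_cast; ring
      rw [hl]
      have := Real.log_two_gt_d9
      linarith
    -- integrability of s ^ x * ω s
    have hcont : ContinuousOn (fun s : ℝ => s ^ x) (Icc (0:ℝ) 1) := by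
      intro s _
      exact (Real.continuousAt_rpow_const s x (Or.inr hxpos.le)).continuousWithinAt
    have hIg : IntegrableOn (fun s : ℝ => s ^ x * ω s) (Icc (0:ℝ) 1) :=
      hI.continuousOn_mul hcont isCompact_Icc
    have hIgr : IntervalIntegrable (fun s : ℝ => s ^ x * ω s) volume r 1 := by
      apply IntegrableOn.intervalIntegrable
      rw [uIcc_of_le hr1.le]
      exact hIg.mono_set (Icc_subset_Icc hr0 le_rfl)
    have hIg01 : IntervalIntegrable (fun s : ℝ => s ^ x * ω s) volume 0 1 := by
      apply IntegrableOn.intervalIntegrable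
      rw [uIcc_of_le zero_le_one]
      exact hIg
    have hstep1 : r ^ x * what ω r = ∫ s in r..1, r ^ x * ω s :=
      (intervalIntegral.integral_const_mul _ _).symm
    have hstep2 : (∫ s in r..1, r ^ x * ω s) ≤ ∫ s in r..1, s ^ x * ω s := by
      apply intervalIntegral.integral_mono_ae_restrict hr1.le
        ((hII r 1 hr0 hr1.le le_rfl).const_mul _) hIgr
      filter_upwards [ae_restrict_mem measurableSet_Icc, ae_restrict_of_ae hne1] with s hs hs1
      have hωs : 0 ≤ ω s := hnn s ⟨le_trans hr0 hs.1, lt_of_le_of_ne hs.2 hs1⟩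
      have : r ^ x ≤ s ^ x := Real.rpow_le_rpow hrpos.le hs.1 hxpos.le
      exact mul_le_mul_of_nonneg_right this hωs
    have hstep3 : (∫ s in r..1, s ^ x * ω s) ≤ ∫ s in (0:ℝ)..1, s ^ x * ω s := by
      apply intervalIntegral.integral_mono_interval hr0 hr1.le le_rfl ?_ hIg01
      filter_upwards [ae_restrict_mem measurableSet_Ioc, ae_restrict_of_ae hne1] with s hs hs1
      have hωs : 0 ≤ ω s := hnn s ⟨hs.1.le, lt_of_le_of_ne hs.2 hs1⟩
      exact mul_nonneg (Real.rpow_nonneg hs.1.le x) hωs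
    have hwr : 0 ≤ what ω r := wnn r hr0 hr1.le
    have hchain : (1/16 : ℝ) * what ω r ≤ C * what ω ((1+r)/2) := by
      calc (1/16 : ℝ) * what ω r ≤ r ^ x * what ω r :=
            mul_le_mul_of_nonneg_right hrx hwr
        _ = ∫ s in r..1, r ^ x * ω s := hstep1
        _ ≤ ∫ s in r..1, s ^ x * ω s := hstep2
        _ ≤ ∫ s in (0:ℝ)..1, s ^ x * ω s := hstep3
        _ ≤ C * what ω ((1+r)/2) := hm
    have hfin : 16 * C * what ω ((1+r)/2) ≤ (B + 1) * what ω ((1+r)/2) := by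
      apply mul_le_mul_of_nonneg_right _ hw2nn
      exact le_trans (le_max_left _ _) (by linarith)
    linarith
end

section
/- Let ω be a radial weight in D̂, i.e., there exist C > 0 and β > 0 with ω̂(r) ≤ C·((1-r)/(1-t))^β · ω̂(t) for all 0 ≤ r ≤ t < 1, where ω̂(r) = ∫_r^1 ω(s) ds > 0. Define J_ω(r) = ∫_0^r dt/(ω̂(t)(1-t)). Then J_ω(r) + 1 ≍ J_ω(r²) + 1 for all 0 ≤ r < 1, i.e., there exist constants c₁, c₂ > 0 with c₁(J_ω(r²)+1) ≤ J_ω(r)+1 ≤ c₂(J_ω(r²)+1). -/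
open MeasureTheory Set

noncomputable def Jom (ω : ℝ → ℝ) (r : ℝ) : ℝ := ∫ t in (0:ℝ)..r, 1 / (what ω t * (1 - t))

section aux
variable {ω : ℝ → ℝ} (hint : IntegrableOn ω (Set.Ico (0:ℝ) 1))
  (hnn : ∀ r ∈ Set.Ico (0:ℝ) 1, 0 ≤ ω r)
  (hpos : ∀ r ∈ Set.Ico (0:ℝ) 1, 0 < what ω r)

include hint in
lemma omInt : ∀ a b : ℝ, 0 ≤ a → a ≤ b → b ≤ 1 → IntervalIntegrable ω volume a b := by
  intro a b ha hab hb
  rw [intervalIntegrable_iff, uIoc_of_le hab, integrableOn_Ioc_iff_integrableOn_Ioo]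
  exact hint.mono_set (fun x hx => ⟨le_of_lt (lt_of_le_of_lt ha hx.1), lt_of_lt_of_le hx.2 hb⟩)

include hint hnn in
lemma whatAnti : ∀ a b : ℝ, 0 ≤ a → a ≤ b → b ≤ 1 → what ω b ≤ what ω a := by
  intro a b ha hab hb
  have h1 : (∫ s in a..b, ω s) + (∫ s in b..(1:ℝ), ω s) = ∫ s in a..(1:ℝ), ω s :=
    intervalIntegral.integral_add_adjacent_intervals (omInt hint a b ha hab hb)
      (omInt hint b 1 (ha.trans hab) hb le_rfl)
  have h2 : 0 ≤ ∫ s in a..b, ω s := by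
    rw [intervalIntegral.integral_of_le hab, MeasureTheory.integral_Ioc_eq_integral_Ioo]
    exact setIntegral_nonneg measurableSet_Ioo
      (fun x hx => hnn x ⟨le_of_lt (lt_of_le_of_lt ha hx.1), lt_of_lt_of_le hx.2 hb⟩)
  simp only [what]
  linarith

include hint in
lemma whatCont : ContinuousOn (what ω) (Icc (0:ℝ) 1) := by
  have hprim : ContinuousOn (fun x => ∫ t in (0:ℝ)..x, ω t) (Icc (0:ℝ) 1) := by
    have := intervalIntegral.continuousOn_primitive_interval
        (a := (0:ℝ)) (b := 1) (μ := volume) (f := ω) ?_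
    · simpa [uIcc_of_le (by norm_num : (0:ℝ) ≤ 1)] using this
    · rw [uIcc_of_le (by norm_num : (0:ℝ) ≤ 1), integrableOn_Icc_iff_integrableOn_Ico]
      exact hint
  have heq : ∀ t ∈ Icc (0:ℝ) 1, what ω t = (∫ s in (0:ℝ)..1, ω s) - ∫ s in (0:ℝ)..t, ω s := by
    intro t ht
    have := intervalIntegral.integral_add_adjacent_intervals (omInt hint 0 t le_rfl ht.1 ht.2)
      (omInt hint t 1 ht.1 ht.2 le_rfl)
    simp only [what]
    linarith
  exact ContinuousOn.congr (continuousOn_const.sub hprim) heq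

include hint hpos in
lemma fCont : ∀ b : ℝ, b < 1 → ContinuousOn (fun t => 1 / (what ω t * (1 - t))) (Icc (0:ℝ) b) := by
  intro b hb
  have hsub : Icc (0:ℝ) b ⊆ Icc 0 1 := Icc_subset_Icc le_rfl hb.le
  apply ContinuousOn.div continuousOn_const
  · exact ((whatCont hint).mono hsub).mul (continuousOn_const.sub continuousOn_id)
  · intro t ht
    have h1 : 0 < what ω t := hpos t ⟨ht.1, lt_of_le_of_lt ht.2 hb⟩
    have h2 : 0 < 1 - t := by linarith [lt_of_le_of_lt ht.2 hb]
    positivity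

include hint hpos in
lemma fInt : ∀ a b : ℝ, 0 ≤ a → a ≤ b → b < 1 →
    IntervalIntegrable (fun t => 1 / (what ω t * (1 - t))) volume a b := by
  intro a b ha hab hb
  apply ContinuousOn.intervalIntegrable
  rw [uIcc_of_le hab]
  exact (fCont hint hpos b hb).mono (Icc_subset_Icc ha le_rfl)

include hpos in
lemma fNonneg : ∀ t ∈ Icc (0:ℝ) 1, t ≠ 1 → 0 ≤ 1 / (what ω t * (1 - t)) := by
  intro t ht ht1
  have h1 : 0 < what ω t := hpos t ⟨ht.1, lt_of_le_of_ne ht.2 ht1⟩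
  have h2 : 0 < 1 - t := by
    have := lt_of_le_of_ne ht.2 ht1; linarith
  positivity

include hint hpos in
lemma JomSplit : ∀ a b : ℝ, 0 ≤ a → a ≤ b → b < 1 →
    Jom ω b = Jom ω a + ∫ t in a..b, 1 / (what ω t * (1 - t)) := by
  intro a b ha hab hb
  have := intervalIntegral.integral_add_adjacent_intervals
    (fInt hint hpos 0 a le_rfl ha (lt_of_le_of_lt hab hb)) (fInt hint hpos a b ha hab hb)
  simp only [Jom]; linarith

include hint hpos in
lemma fIntNonneg : ∀ a b : ℝ, 0 ≤ a → a ≤ b → b < 1 →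
    0 ≤ ∫ t in a..b, 1 / (what ω t * (1 - t)) := by
  intro a b ha hab hb
  apply intervalIntegral.integral_nonneg hab
  intro u hu
  exact fNonneg hpos u ⟨le_trans ha hu.1, (hu.2.trans hb.le)⟩ (by rintro rfl; exact absurd hu.2 (not_le.2 hb))

include hint hpos in
lemma JomMono : ∀ a b : ℝ, 0 ≤ a → a ≤ b → b < 1 → Jom ω a ≤ Jom ω b := by
  intro a b ha hab hb
  have := JomSplit hint hpos a b ha hab hb
  have := fIntNonneg hint hpos a b ha hab hb
  linarith

include hint hpos in
lemma JomNonneg : ∀ b : ℝ, 0 ≤ b → b < 1 → 0 ≤ Jom ω b := by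
  intro b hb hb1
  have := JomMono hint hpos 0 b le_rfl hb hb1
  simpa [Jom] using this

end aux

set_option maxHeartbeats 1000000 in
theorem stmt_6 (ω : ℝ → ℝ)
    (hint : IntegrableOn ω (Set.Ico (0:ℝ) 1))
    (hnn : ∀ r ∈ Set.Ico (0:ℝ) 1, 0 ≤ ω r)
    (hpos : ∀ r ∈ Set.Ico (0:ℝ) 1, 0 < what ω r)
    (C β : ℝ) (hC : 0 < C) (hβ : 0 < β)
    (hDD : ∀ r t : ℝ, 0 ≤ r → r ≤ t → t < 1 →
      what ω r ≤ C * ((1 - r) / (1 - t)) ^ β * what ω t) :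
    ∃ c₁ c₂ : ℝ, 0 < c₁ ∧ 0 < c₂ ∧ ∀ r ∈ Set.Ico (0:ℝ) 1,
      c₁ * (Jom ω (r ^ 2) + 1) ≤ Jom ω r + 1 ∧ Jom ω r + 1 ≤ c₂ * (Jom ω (r ^ 2) + 1) := by
  set W : ℝ := what ω (1/2) with hW
  have hWpos : 0 < W := hpos (1/2) ⟨by norm_num, by norm_num⟩
  clear_value W
  have h2β : (0:ℝ) < 2 ^ β := Real.rpow_pos_of_pos (by norm_num) β
  set M : ℝ := C * 2 ^ β / W + 2 * C ^ 2 * (2 ^ β) ^ 2 with hM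
  have hMpos : 0 < M := by rw [hM]; positivity
  clear_value M
  refine ⟨1, 1 + M, one_pos, by linarith, fun r hr => ?_⟩
  obtain ⟨hr0, hr1⟩ := hr
  have hr2le : r ^ 2 ≤ r := by nlinarith
  have hr2lt : r ^ 2 < 1 := lt_of_le_of_lt hr2le hr1
  have hr20 : 0 ≤ r ^ 2 := sq_nonneg r
  set w2 : ℝ := what ω (r ^ 2) with hw2
  have hw2pos : 0 < w2 := hpos _ ⟨hr20, hr2lt⟩
  clear_value w2
  -- split
  have hsplit := JomSplit hint hpos (r ^ 2) r hr20 hr2le hr1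
  constructor
  · have := JomMono hint hpos (r ^ 2) r hr20 hr2le hr1
    linarith
  -- Claim A : the tail integral is ≤ C * 2^β / w2
  have claimA : (∫ t in (r ^ 2)..r, 1 / (what ω t * (1 - t))) ≤ C * 2 ^ β / w2 := by
    set K : ℝ := C * (1 - r ^ 2) ^ β / (w2 * (1 - r) ^ (β + 1)) with hK
    clear_value K
    have h1r : (0:ℝ) < 1 - r := by linarith
    have h1r2 : (0:ℝ) < 1 - r ^ 2 := by linarith
    have hbound : ∀ t ∈ Icc (r ^ 2) r, 1 / (what ω t * (1 - t)) ≤ K := by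
      intro t ht
      have ht1 : t < 1 := lt_of_le_of_lt ht.2 hr1
      have ht0 : 0 ≤ t := le_trans hr20 ht.1
      have h1t : 0 < 1 - t := by linarith
      have hwt : 0 < what ω t := hpos t ⟨ht0, ht1⟩
      have hdd := hDD (r ^ 2) t hr20 ht.1 ht1
      rw [← hw2, Real.div_rpow h1r2.le h1t.le] at hdd
      have hp : (0:ℝ) < (1 - t) ^ β := Real.rpow_pos_of_pos h1t β
      have ha : (0:ℝ) < (1 - r ^ 2) ^ β := Real.rpow_pos_of_pos h1r2 β
      have h1 : w2 * (1 - t) ^ β ≤ C * (1 - r ^ 2) ^ β * what ω t := by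
        calc w2 * (1 - t) ^ β ≤ (C * ((1 - r ^ 2) ^ β / (1 - t) ^ β) * what ω t) * (1 - t) ^ β :=
              mul_le_mul_of_nonneg_right hdd hp.le
          _ = C * (1 - r ^ 2) ^ β * what ω t := by field_simp
      have hq : (1 - r) ^ (β + 1) ≤ (1 - t) ^ (β + 1) :=
        Real.rpow_le_rpow h1r.le (by linarith [ht.2]) (by linarith)
      have hqt : (1 - t) ^ (β + 1) = (1 - t) ^ β * (1 - t) := by
        rw [Real.rpow_add_one (ne_of_gt h1t)]
      have hlow : w2 * (1 - r) ^ (β + 1) / (C * (1 - r ^ 2) ^ β) ≤ what ω t * (1 - t) := by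
        rw [div_le_iff₀ (by positivity)]
        calc w2 * (1 - r) ^ (β + 1) ≤ w2 * ((1 - t) ^ β * (1 - t)) := by
              apply mul_le_mul_of_nonneg_left _ hw2pos.le
              rw [← hqt]; exact hq
          _ = (w2 * (1 - t) ^ β) * (1 - t) := by ring
          _ ≤ (C * (1 - r ^ 2) ^ β * what ω t) * (1 - t) := mul_le_mul_of_nonneg_right h1 h1t.le
          _ = what ω t * (1 - t) * (C * (1 - r ^ 2) ^ β) := by ring
      calc 1 / (what ω t * (1 - t)) ≤ 1 / (w2 * (1 - r) ^ (β + 1) / (C * (1 - r ^ 2) ^ β)) :=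
            one_div_le_one_div_of_le (by positivity) hlow
        _ = K := by rw [one_div_div, hK]
    have hmono := intervalIntegral.integral_mono_on hr2le (fInt hint hpos _ _ hr20 hr2le hr1)
      (intervalIntegrable_const) hbound
    have hconst : (∫ _ in (r ^ 2)..r, K) = (r - r ^ 2) * K := by
      rw [intervalIntegral.integral_const, smul_eq_mul]
    have hfinal : (r - r ^ 2) * K ≤ C * 2 ^ β / w2 := by
      have hfac : (1 - r ^ 2) ^ β = (1 - r) ^ β * (1 + r) ^ β := by
        rw [show (1 : ℝ) - r ^ 2 = (1 - r) * (1 + r) by ring,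
          Real.mul_rpow h1r.le (by linarith)]
      have hrq : (1 - r) ^ (β + 1) = (1 - r) ^ β * (1 - r) := Real.rpow_add_one (ne_of_gt h1r) _
      have heq : (r - r ^ 2) * K = r * C * (1 + r) ^ β / w2 := by
        rw [hK, hfac, hrq]
        have hb0 : (0:ℝ) < (1 - r) ^ β := Real.rpow_pos_of_pos h1r β
        have hpr0 : (0:ℝ) ≤ (1 + r) ^ β := Real.rpow_nonneg (by linarith) β
        field_simp
      rw [heq]
      have h1pr : (1 + r) ^ β ≤ 2 ^ β := Real.rpow_le_rpow (by linarith) (by linarith) hβ.le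
      have h1prnn : (0:ℝ) ≤ (1 + r) ^ β := Real.rpow_nonneg (by linarith) β
      have hx : (0:ℝ) ≤ C * (1 + r) ^ β := by positivity
      have hnum : r * C * (1 + r) ^ β ≤ C * 2 ^ β := by
        nlinarith [mul_le_mul_of_nonneg_right hr1.le hx, mul_le_mul_of_nonneg_left h1pr hC.le]
      gcongr
    calc (∫ t in (r ^ 2)..r, 1 / (what ω t * (1 - t))) ≤ ∫ _ in (r ^ 2)..r, K := hmono
      _ = (r - r ^ 2) * K := hconst
      _ ≤ C * 2 ^ β / w2 := hfinal
  -- Claim B : 1 / w2 ≤ 1 / W + 2 * C * 2^β * Jom ω (r^2)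
  have hJ2 : 0 ≤ Jom ω (r ^ 2) := JomNonneg hint hpos _ hr20 hr2lt
  have claimB : 1 / w2 ≤ 1 / W + 2 * C * 2 ^ β * Jom ω (r ^ 2) := by
    rcases le_or_gt (r ^ 2) (1/2) with hhalf | hhalf
    · have hanti := whatAnti hint hnn (r ^ 2) (1/2) hr20 hhalf (by norm_num)
      rw [← hw2, ← hW] at hanti
      have h1 : 1 / w2 ≤ 1 / W := one_div_le_one_div_of_le hWpos hanti
      nlinarith [mul_nonneg (mul_nonneg (by linarith : (0:ℝ) ≤ 2 * C) h2β.le) hJ2]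
    · set s : ℝ := 2 * r ^ 2 - 1 with hs
      have hs0 : 0 ≤ s := by rw [hs]; linarith
      have hsr2 : s ≤ r ^ 2 := by rw [hs]; linarith
      have h1r2 : (0:ℝ) < 1 - r ^ 2 := by linarith
      set c0 : ℝ := 1 / (2 * C * 2 ^ β * (1 - r ^ 2) * w2) with hc0
      clear_value c0
      have hc0pos : 0 < c0 := by rw [hc0]; positivity
      have hlowpt : ∀ t ∈ Icc s (r ^ 2), c0 ≤ 1 / (what ω t * (1 - t)) := by
        intro t ht
        have ht0 : 0 ≤ t := le_trans hs0 ht.1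
        have ht1 : t < 1 := lt_of_le_of_lt ht.2 hr2lt
        have h1t : 0 < 1 - t := by linarith
        have hwt : 0 < what ω t := hpos t ⟨ht0, ht1⟩
        have hdd := hDD t (r ^ 2) ht0 ht.2 hr2lt
        rw [← hw2, Real.div_rpow h1t.le h1r2.le] at hdd
        have h1t2 : 1 - t ≤ 2 * (1 - r ^ 2) := by
          have := ht.1; rw [hs] at this; linarith
        have h2b : (1 - t) ^ β ≤ 2 ^ β * (1 - r ^ 2) ^ β := by
          rw [← Real.mul_rpow (by norm_num) h1r2.le]
          exact Real.rpow_le_rpow h1t.le h1t2 hβ.le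
        have ha : (0:ℝ) < (1 - r ^ 2) ^ β := Real.rpow_pos_of_pos h1r2 β
        have hwub : what ω t ≤ C * 2 ^ β * w2 := by
          calc what ω t ≤ C * ((1 - t) ^ β / (1 - r ^ 2) ^ β) * w2 := hdd
            _ ≤ C * ((2 ^ β * (1 - r ^ 2) ^ β) / (1 - r ^ 2) ^ β) * w2 := by
                apply mul_le_mul_of_nonneg_right _ hw2pos.le
                apply mul_le_mul_of_nonneg_left _ hC.le
                gcongr
            _ = C * 2 ^ β * w2 := by field_simp
        have hub : what ω t * (1 - t) ≤ 2 * C * 2 ^ β * (1 - r ^ 2) * w2 := by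
          calc what ω t * (1 - t) ≤ (C * 2 ^ β * w2) * (2 * (1 - r ^ 2)) := by
                apply mul_le_mul hwub h1t2 h1t.le (by positivity)
            _ = 2 * C * 2 ^ β * (1 - r ^ 2) * w2 := by ring
        rw [hc0]
        exact one_div_le_one_div_of_le (by positivity) hub
      have hmono := intervalIntegral.integral_mono_on hsr2 intervalIntegrable_const
        (fInt hint hpos s (r ^ 2) hs0 hsr2 hr2lt) hlowpt
      have hconst : (∫ _ in s..(r ^ 2), c0) = (1 - r ^ 2) * c0 := by
        simp only [intervalIntegral.integral_const, smul_eq_mul, hs]; ring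
      have hJlow : 1 / (2 * C * 2 ^ β * w2) ≤ Jom ω (r ^ 2) := by
        have hsp := JomSplit hint hpos s (r ^ 2) hs0 hsr2 hr2lt
        have hnn0 : 0 ≤ Jom ω s := JomNonneg hint hpos s hs0 (lt_of_le_of_lt hsr2 hr2lt)
        have hce : (1 - r ^ 2) * c0 = 1 / (2 * C * 2 ^ β * w2) := by
          rw [hc0]; field_simp
        rw [← hce]
        calc (1 - r ^ 2) * c0 = ∫ _ in s..(r ^ 2), c0 := hconst.symm
          _ ≤ ∫ t in s..(r ^ 2), 1 / (what ω t * (1 - t)) := hmono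
          _ ≤ Jom ω (r ^ 2) := by linarith
      have hinv : 1 / w2 ≤ 2 * C * 2 ^ β * Jom ω (r ^ 2) := by
        rw [show (1:ℝ) / w2 = (2 * C * 2 ^ β) * (1 / (2 * C * 2 ^ β * w2)) by field_simp]
        exact mul_le_mul_of_nonneg_left hJlow (by positivity)
      have hWnn : 0 ≤ 1 / W := by positivity
      linarith
  -- combine
  have hdiff : (∫ t in (r ^ 2)..r, 1 / (what ω t * (1 - t))) ≤ M * (Jom ω (r ^ 2) + 1) := by
    calc (∫ t in (r ^ 2)..r, 1 / (what ω t * (1 - t))) ≤ C * 2 ^ β / w2 := claimA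
      _ = C * 2 ^ β * (1 / w2) := by ring
      _ ≤ C * 2 ^ β * (1 / W + 2 * C * 2 ^ β * Jom ω (r ^ 2)) :=
          mul_le_mul_of_nonneg_left claimB (by positivity)
      _ ≤ M * (Jom ω (r ^ 2) + 1) := by
          have e1 : C * 2 ^ β * (1 / W + 2 * C * 2 ^ β * Jom ω (r ^ 2))
              = C * 2 ^ β / W + 2 * C ^ 2 * (2 ^ β) ^ 2 * Jom ω (r ^ 2) := by
            field_simp
          rw [e1, hM]
          nlinarith [mul_nonneg (le_of_lt (show (0:ℝ) < C * 2 ^ β / W by positivity)) hJ2,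
            (show (0:ℝ) < 2 * C ^ 2 * (2 ^ β) ^ 2 by positivity)]
  have hexp : (1 + M) * (Jom ω (r ^ 2) + 1) = Jom ω (r ^ 2) + 1 + M * (Jom ω (r ^ 2) + 1) := by ring
  linarith
end

section
/- Let ω be a radial weight in D̂: there exist C > 0 and β > 0 such that ω̂(r) ≤ C·((1-r)/(1-t))^β · ω̂(t) for all 0 ≤ r ≤ t < 1. Then there exists a constant c > 0 such that J_ω(r) = ∫_0^r dt/(ω̂(t)(1-t)) ≥ c·(1-(1-r)^β)/ω̂(r) for all 0 ≤ r < 1. -/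
open MeasureTheory Set

/-! On `[0, r]` the doubling condition gives `ω̂(t) ≤ C ((1-t)/(1-r))^β ω̂(r)`, so the integrand
of `J_ω` dominates `(1-r)^β (1-t)^(-β-1) / (C ω̂(r))`, whose integral over `[0, r]` is
`(1 - (1-r)^β) / (C β ω̂(r))`. -/

theorem intervalIntegrable_one_sub_rpow {a b : ℝ} (ha : a < 1) (hb : b < 1) (p : ℝ) :
    IntervalIntegrable (fun t => (1 - t) ^ p) volume a b := by
  refine ContinuousOn.intervalIntegrable (ContinuousOn.rpow_const (by fun_prop) fun t ht => ?_)
  rw [mem_uIcc] at ht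
  left
  rcases ht with ht | ht <;> linarith [ht.2]

theorem integral_one_sub_rpow_neg_sub_one {β r : ℝ} (hβ : β ≠ 0) (hr : r < 1) :
    ∫ t in (0:ℝ)..r, (1 - t) ^ (-β - 1) = ((1 - r) ^ (-β) - 1) / β := by
  rw [intervalIntegral.integral_comp_sub_left (fun u : ℝ => u ^ (-β - 1)), sub_zero,
    integral_rpow (Or.inr ⟨by contrapose! hβ; linarith, ?_⟩)]
  · rw [sub_add_cancel, Real.one_rpow]
    field_simp
    ring
  · rw [mem_uIcc]
    rintro (h | h) <;> linarith [h.1]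

theorem rpow_div_mul_rpow_neg_sub_one_le {a b u v C β : ℝ} (ha : 0 < a) (hb : 0 < b)
    (hu : 0 < u) (hv : 0 < v) (hC : 0 < C) (h : u ≤ C * (a / b) ^ β * v) :
    b ^ β / (C * v) * a ^ (-β - 1) ≤ 1 / (u * a) := by
  have haβ : 0 < a ^ β := by positivity
  have hbβ : 0 < b ^ β := by positivity
  rw [Real.div_rpow ha.le hb.le] at h
  rw [Real.rpow_sub_one ha.ne', Real.rpow_neg ha.le]
  field_simp at h ⊢
  exact h

theorem continuousOn_what {ω : ℝ → ℝ} (hint : IntegrableOn ω (Ico 0 1)) :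
    ContinuousOn (what ω) (Icc 0 1) := by
  have := intervalIntegral.continuousOn_primitive_interval_left (μ := volume) (a := 0) (b := 1)
    (f := ω) (by rwa [uIcc_of_le zero_le_one, integrableOn_Icc_iff_integrableOn_Ico])
  rwa [uIcc_of_le zero_le_one] at this

theorem intervalIntegrable_one_div_what_mul {ω : ℝ → ℝ} (hint : IntegrableOn ω (Ico 0 1))
    (hpos : ∀ r ∈ Ico (0:ℝ) 1, 0 < what ω r) {r : ℝ} (hr0 : 0 ≤ r) (hr1 : r < 1) :
    IntervalIntegrable (fun t => 1 / (what ω t * (1 - t))) volume 0 r := by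
  refine ContinuousOn.intervalIntegrable_of_Icc hr0 (continuousOn_const.div ?_ fun t ht => ?_)
  · exact ((continuousOn_what hint).mono (Icc_subset_Icc_right hr1.le)).mul
      (continuousOn_const.sub continuousOn_id)
  · have := hpos t ⟨ht.1, ht.2.trans_lt hr1⟩
    have : 0 < 1 - t := by linarith [ht.2]
    positivity

theorem stmt_7_general (ω : ℝ → ℝ)
    (hint : IntegrableOn ω (Set.Ico (0:ℝ) 1))
    (hpos : ∀ r ∈ Set.Ico (0:ℝ) 1, 0 < what ω r)
    (C β : ℝ) (hC : 0 < C) (hβ : 0 < β)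
    (hDD : ∀ r t : ℝ, 0 ≤ r → r ≤ t → t < 1 →
      what ω r ≤ C * ((1 - r) / (1 - t)) ^ β * what ω t) :
    ∃ c : ℝ, 0 < c ∧ ∀ r ∈ Set.Ico (0:ℝ) 1,
      Jom ω r ≥ c * (1 - (1 - r) ^ β) / what ω r := by
  refine ⟨1 / (C * β), by positivity, ?_⟩
  rintro r ⟨hr0, hr1⟩
  have hWr : 0 < what ω r := hpos r ⟨hr0, hr1⟩
  have h1r : 0 < 1 - r := by linarith
  set K := (1 - r) ^ β / (C * what ω r)
  have hlower : ∀ t ∈ Icc 0 r, K * (1 - t) ^ (-β - 1) ≤ 1 / (what ω t * (1 - t)) :=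
    fun t ht => rpow_div_mul_rpow_neg_sub_one_le (by linarith [ht.2]) h1r
      (hpos t ⟨ht.1, ht.2.trans_lt hr1⟩) hWr hC (hDD t r ht.1 ht.2 hr1)
  calc 1 / (C * β) * (1 - (1 - r) ^ β) / what ω r
      = ∫ t in (0:ℝ)..r, K * (1 - t) ^ (-β - 1) := by
        rw [intervalIntegral.integral_const_mul, integral_one_sub_rpow_neg_sub_one hβ.ne' hr1,
          Real.rpow_neg h1r.le]
        simp only [K]
        field_simp
    _ ≤ Jom ω r := intervalIntegral.integral_mono_on hr0
        ((intervalIntegrable_one_sub_rpow (by norm_num) hr1 _).const_mul K)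
        (intervalIntegrable_one_div_what_mul hint hpos hr0 hr1) hlower

theorem stmt_7 (ω : ℝ → ℝ)
    (hint : IntegrableOn ω (Set.Ico (0:ℝ) 1))
    (hnn : ∀ r ∈ Set.Ico (0:ℝ) 1, 0 ≤ ω r)
    (hpos : ∀ r ∈ Set.Ico (0:ℝ) 1, 0 < what ω r)
    (C β : ℝ) (hC : 0 < C) (hβ : 0 < β)
    (hDD : ∀ r t : ℝ, 0 ≤ r → r ≤ t → t < 1 →
      what ω r ≤ C * ((1 - r) / (1 - t)) ^ β * what ω t) :
    ∃ c : ℝ, 0 < c ∧ ∀ r ∈ Set.Ico (0:ℝ) 1,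
      Jom ω r ≥ c * (1 - (1 - r) ^ β) / what ω r :=
  stmt_7_general ω hint hpos C β hC hβ hDD
end

section
/- Let η ∈ Ď be a radial weight (there exist C' > 0 and γ ∈ (0,1) such that η̂(t) ≤ C'·((1-t)/(1-r))^γ·η̂(r) for 0 ≤ r ≤ t < 1) and let 1 < p < ∞. Then there exists a constant c > 0 such that ∫_0^r dt/(η̂(t)^{1/p}(1-t)) ≤ c/η̂(r)^{1/p} for all 0 ≤ r < 1. -/
open MeasureTheory Set

theorem stmt_14 (p : ℝ) (hp : 1 < p)
    (η : ℝ → ℝ)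
    (hint : IntegrableOn η (Set.Ico (0:ℝ) 1))
    (hnn : ∀ r ∈ Set.Ico (0:ℝ) 1, 0 ≤ η r)
    (hpos : ∀ r ∈ Set.Ico (0:ℝ) 1, 0 < what η r)
    (C' γ : ℝ) (hC' : 0 < C') (hγ₀ : 0 < γ) (hγ₁ : γ < 1)
    (hDd : ∀ r t : ℝ, 0 ≤ r → r ≤ t → t < 1 →
      what η t ≤ C' * ((1 - t) / (1 - r)) ^ γ * what η r) :
    ∃ c : ℝ, 0 < c ∧ ∀ r ∈ Set.Ico (0:ℝ) 1,
      (∫ t in (0:ℝ)..r, 1 / ((what η t) ^ (1 / p) * (1 - t))) ≤ c / (what η r) ^ (1 / p) := by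
  have hp0 : (0:ℝ) < p := lt_trans one_pos hp
  have hip : (0:ℝ) < 1 / p := by positivity
  set β : ℝ := γ / p with hβ
  have hβ0 : 0 < β := by positivity
  -- η is integrable on Icc 0 1
  have hintIcc : IntegrableOn η (Set.Icc (0:ℝ) 1) := by
    rwa [integrableOn_Icc_iff_integrableOn_Ico]
  have hII : ∀ a b : ℝ, 0 ≤ a → a ≤ b → b ≤ 1 → IntervalIntegrable η volume a b := by
    intro a b ha hab hb
    rw [intervalIntegrable_iff, Set.uIoc_of_le hab]
    exact hintIcc.mono_set (fun x hx => ⟨le_trans ha (le_of_lt hx.1), le_trans hx.2 hb⟩)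
  -- `what η` is antitone on [0,1]
  have hanti : ∀ a b : ℝ, 0 ≤ a → a ≤ b → b ≤ 1 → what η b ≤ what η a := by
    intro a b ha hab hb1
    have h1 : what η a = (∫ s in a..b, η s) + what η b := by
      rw [what, what, intervalIntegral.integral_add_adjacent_intervals
        (hII a b ha hab hb1) (hII b 1 (le_trans ha hab) hb1 le_rfl)]
    have h2 : 0 ≤ ∫ s in a..b, η s := by
      apply intervalIntegral.integral_nonneg_of_ae_restrict hab
      have hone : ∀ᵐ x : ℝ, x ≠ 1 := by
        have := Real.volume_singleton (a := 1)
        exact (MeasureTheory.ae_iff (p := fun x : ℝ => x ≠ 1)).2 (by simpa using this)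
      have key : ∀ᵐ x : ℝ, x ∈ Set.Icc a b → (0:ℝ → ℝ) x ≤ η x := by
        filter_upwards [hone] with x hx hxm
        exact hnn x ⟨le_trans ha hxm.1, lt_of_le_of_ne (le_trans hxm.2 hb1) hx⟩
      exact (ae_restrict_iff' measurableSet_Icc).2 key
    linarith
  refine ⟨C' ^ (1/p) * (p / γ), by positivity, ?_⟩
  intro r hr
  obtain ⟨hr0, hr1⟩ := hr
  have h1r : (0:ℝ) < 1 - r := by linarith
  have hWr : 0 < what η r := hpos r ⟨hr0, hr1⟩
  have hWrp : 0 < (what η r) ^ (1/p) := Real.rpow_pos_of_pos hWr _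
  set K : ℝ := C' ^ (1/p) * (1 - r) ^ β / (what η r) ^ (1/p) with hK
  have hK0 : 0 < K := by positivity
  -- pointwise bound of the integrand by g t = K * (1-t)^(-β-1)
  have hpt : ∀ t ∈ Set.Icc (0:ℝ) r,
      1 / ((what η t) ^ (1/p) * (1 - t)) ≤ K * (1 - t) ^ (-β - 1) := by
    intro t ht
    have ht0 : 0 ≤ t := ht.1
    have htr : t ≤ r := ht.2
    have ht1 : t < 1 := lt_of_le_of_lt htr hr1
    have h1t : (0:ℝ) < 1 - t := by linarith
    have hWt : 0 < what η t := hpos t ⟨ht0, ht1⟩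
    have hWtp : 0 < (what η t) ^ (1/p) := Real.rpow_pos_of_pos hWt _
    have hq : (0:ℝ) ≤ (1 - r) / (1 - t) := by positivity
    -- from the Ď condition with roles (t, r)
    have h := hDd t r ht0 htr hr1
    have h2 : (what η r) ^ (1/p) ≤
        C' ^ (1/p) * ((1 - r) / (1 - t)) ^ β * (what η t) ^ (1/p) := by
      have := Real.rpow_le_rpow (le_of_lt hWr) h (le_of_lt hip)
      calc (what η r) ^ (1/p) ≤ (C' * ((1 - r) / (1 - t)) ^ γ * what η t) ^ (1/p) := this
        _ = C' ^ (1/p) * ((1 - r) / (1 - t)) ^ β * (what η t) ^ (1/p) := by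
            rw [Real.mul_rpow (by positivity) (le_of_lt hWt),
              Real.mul_rpow (le_of_lt hC') (by positivity),
              ← Real.rpow_mul hq, mul_one_div, ← hβ]
    -- compare fractions
    have hmain : 1 / ((what η t) ^ (1/p) * (1 - t)) ≤
        (C' ^ (1/p) * ((1 - r) / (1 - t)) ^ β) / ((what η r) ^ (1/p) * (1 - t)) := by
      rw [div_le_div_iff₀ (by positivity) (by positivity)]
      calc 1 * ((what η r) ^ (1/p) * (1 - t))
          = (what η r) ^ (1/p) * (1 - t) := by ring
        _ ≤ (C' ^ (1/p) * ((1 - r) / (1 - t)) ^ β * (what η t) ^ (1/p)) * (1 - t) := by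
            apply mul_le_mul_of_nonneg_right h2 (le_of_lt h1t)
        _ = C' ^ (1/p) * ((1 - r) / (1 - t)) ^ β * ((what η t) ^ (1/p) * (1 - t)) := by ring
    refine le_trans hmain (le_of_eq ?_)
    rw [Real.div_rpow (le_of_lt h1r) (le_of_lt h1t),
      Real.rpow_sub h1t, Real.rpow_neg (le_of_lt h1t), Real.rpow_one, hK]
    field_simp
  -- integrability of the left-hand integrand (monotone on [0,r])
  have hmono : MonotoneOn (fun t => 1 / ((what η t) ^ (1/p) * (1 - t))) (Set.Icc 0 r) := by
    intro a ha b hb hab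
    have ha1 : a < 1 := lt_of_le_of_lt ha.2 hr1
    have hb1 : b < 1 := lt_of_le_of_lt hb.2 hr1
    have hWa : 0 < what η a := hpos a ⟨ha.1, ha1⟩
    have hWb : 0 < what η b := hpos b ⟨hb.1, hb1⟩
    have hW : what η b ≤ what η a := hanti a b ha.1 hab (le_of_lt hb1)
    have h1 : (what η b) ^ (1/p) ≤ (what η a) ^ (1/p) :=
      Real.rpow_le_rpow (le_of_lt hWb) hW (le_of_lt hip)
    have h2 : (what η b) ^ (1/p) * (1 - b) ≤ (what η a) ^ (1/p) * (1 - a) := by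
      apply mul_le_mul h1 (by linarith) (by linarith) (le_of_lt (Real.rpow_pos_of_pos hWa _))
    exact one_div_le_one_div_of_le
      (mul_pos (Real.rpow_pos_of_pos hWb _) (by linarith)) h2
  have hfInt : IntervalIntegrable (fun t => 1 / ((what η t) ^ (1/p) * (1 - t)))
      volume 0 r := by
    apply MonotoneOn.intervalIntegrable
    rwa [Set.uIcc_of_le hr0]
  have hgInt : IntervalIntegrable (fun t => K * (1 - t) ^ (-β - 1)) volume 0 r := by
    apply ContinuousOn.intervalIntegrable
    apply ContinuousOn.mul continuousOn_const
    apply ContinuousOn.rpow_const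
    · exact (continuousOn_const.sub continuousOn_id)
    · intro x hx
      rw [Set.uIcc_of_le hr0] at hx
      left
      have : x < 1 := lt_of_le_of_lt hx.2 hr1
      exact ne_of_gt (by linarith)
  -- the integral bound
  have hle := intervalIntegral.integral_mono_on hr0 hfInt hgInt hpt
  refine le_trans hle ?_
  -- compute ∫ t in 0..r, K * (1-t)^(-β-1)
  rw [intervalIntegral.integral_const_mul]
  have hcomp : (∫ t in (0:ℝ)..r, (1 - t) ^ (-β - 1)) =
      ∫ x in (1 - r)..(1:ℝ), x ^ (-β - 1) := by
    have := intervalIntegral.integral_comp_sub_left (a := (0:ℝ)) (b := r)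
      (fun x => x ^ (-β - 1)) 1
    simpa using this
  rw [hcomp, integral_rpow]
  · have hne : -β - 1 + 1 = -β := by ring
    rw [hne]
    have h1pow : (1:ℝ) ^ (-β) = 1 := Real.one_rpow _
    rw [h1pow]
    have hkey : K * ((1 - (1 - r) ^ (-β)) / (-β)) =
        K * (((1 - r) ^ (-β) - 1) / β) := by
      rw [div_neg]; ring
    rw [hkey]
    have hstep : K * (((1 - r) ^ (-β) - 1) / β) ≤ K * ((1 - r) ^ (-β) / β) := by
      have hx : (1 - r) ^ (-β) - 1 ≤ (1 - r) ^ (-β) := by linarith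
      gcongr
    refine le_trans hstep (le_of_eq ?_)
    have hcancel : (1 - r) ^ β * (1 - r) ^ (-β) = 1 := by
      rw [← Real.rpow_add h1r]; norm_num
    have hpg : p / γ = 1 / β := by
      rw [hβ]; field_simp
    have hLHS : K * ((1 - r) ^ (-β) / β) =
        C' ^ (1/p) * ((1 - r) ^ β * (1 - r) ^ (-β)) / (β * (what η r) ^ (1/p)) := by
      rw [hK]; ring
    rw [hLHS, hcancel, hpg]
    field_simp
  · right
    constructor
    · intro h
      have hβ1 : β = 0 := by linarith
      linarith
    · rw [Set.uIcc_of_le (by linarith : 1 - r ≤ 1)]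
      intro h
      exact absurd h.1 (by linarith)
end

section
/- Let ω be a radial weight in Ď (there exist C' > 0, γ > 0 with ω̂(t) ≤ C'·((1-t)/(1-r))^γ·ω̂(r) for 0 ≤ r ≤ t < 1), let 1 < p < ∞, and let η be any radial weight. Then there exists c > 0 such that for all 0 ≤ x < 1: ∫_0^x η̂(t)/(ω̂(t)^p (1-t)) dt ≤ c·(η̂(x)/ω̂(x)^p + ∫_0^x η(t)/ω̂(t)^p dt). -/
open MeasureTheory Set

private lemma what_intInt {f : ℝ → ℝ} (hf : IntegrableOn f (Set.Ico (0:ℝ) 1))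
    {a b : ℝ} (ha : 0 ≤ a) (hab : a ≤ b) (hb : b ≤ 1) :
    IntervalIntegrable f volume a b := by
  have h1 : IntegrableOn f (Set.Icc (0:ℝ) 1) :=
    (integrableOn_Icc_iff_integrableOn_Ico).2 hf
  have h2 : IntegrableOn f (Set.uIcc a b) := by
    apply h1.mono_set
    rw [Set.uIcc_of_le hab]
    exact Set.Icc_subset_Icc ha hb
  exact h2.intervalIntegrable

private lemma what_continuousOn {f : ℝ → ℝ} (hf : IntegrableOn f (Set.Ico (0:ℝ) 1)) :
    ContinuousOn (what f) (Set.Icc (0:ℝ) 1) := by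
  have h1 : IntegrableOn f (Set.uIcc (0:ℝ) 1) := by
    rw [Set.uIcc_of_le zero_le_one]
    exact (integrableOn_Icc_iff_integrableOn_Ico).2 hf
  have h2 := intervalIntegral.continuousOn_primitive_interval_left h1
  rw [Set.uIcc_of_le zero_le_one] at h2
  exact h2

private lemma what_split {f : ℝ → ℝ} (hf : IntegrableOn f (Set.Ico (0:ℝ) 1))
    {a b : ℝ} (ha : 0 ≤ a) (hab : a ≤ b) (hb : b ≤ 1) :
    what f a = (∫ s in a..b, f s) + what f b :=
  (intervalIntegral.integral_add_adjacent_intervals (what_intInt hf ha hab hb)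
    (what_intInt hf (ha.trans hab) hb le_rfl)).symm

theorem stmt_15 (p : ℝ) (hp : 1 < p)
    (ω η : ℝ → ℝ)
    (hωint : IntegrableOn ω (Set.Ico (0:ℝ) 1))
    (hηint : IntegrableOn η (Set.Ico (0:ℝ) 1))
    (hωnn : ∀ r ∈ Set.Ico (0:ℝ) 1, 0 ≤ ω r) (hηnn : ∀ r ∈ Set.Ico (0:ℝ) 1, 0 ≤ η r)
    (hωpos : ∀ r ∈ Set.Ico (0:ℝ) 1, 0 < what ω r)
    (hηpos : ∀ r ∈ Set.Ico (0:ℝ) 1, 0 < what η r)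
    (C' γ : ℝ) (hC' : 0 < C') (hγ : 0 < γ)
    (hDd : ∀ r t : ℝ, 0 ≤ r → r ≤ t → t < 1 →
      what ω t ≤ C' * ((1 - t) / (1 - r)) ^ γ * what ω r) :
    ∃ c : ℝ, 0 < c ∧ ∀ x ∈ Set.Ico (0:ℝ) 1,
      (∫ t in (0:ℝ)..x, what η t / ((what ω t) ^ p * (1 - t)))
        ≤ c * (what η x / (what ω x) ^ p + ∫ t in (0:ℝ)..x, η t / (what ω t) ^ p) := by
  have hp0 : (0:ℝ) < p := lt_trans one_pos hp
  have hq : 0 < γ * p := mul_pos hγ hp0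
  have hCp : (0:ℝ) < C' ^ p := Real.rpow_pos_of_pos hC' p
  refine ⟨C' ^ p / (γ * p), div_pos hCp hq, ?_⟩
  intro x hx
  obtain ⟨hx0, hx1⟩ := hx
  set q : ℝ := γ * p with hqdef
  set A : ℝ := C' ^ p / q with hAdef
  set W : ℝ → ℝ := what ω with hW
  set g : ℝ → ℝ := fun t => 1 / ((W t) ^ p * (1 - t)) with hgdef
  have hWpos : ∀ t ∈ Set.Icc (0:ℝ) x, 0 < W t := fun t ht =>
    hωpos t ⟨ht.1, lt_of_le_of_lt ht.2 hx1⟩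
  have hWcont : ContinuousOn W (Set.Icc 0 x) :=
    (what_continuousOn hωint).mono (Set.Icc_subset_Icc le_rfl hx1.le)
  have hWpcont : ContinuousOn (fun t => (W t) ^ p) (Set.Icc 0 x) :=
    hWcont.rpow_const (fun t ht => Or.inl (ne_of_gt (hWpos t ht)))
  have hgcont : ContinuousOn g (Set.Icc 0 x) := by
    apply ContinuousOn.div continuousOn_const
    · exact hWpcont.mul (continuousOn_const.sub continuousOn_id)
    · intro t ht
      have h1 : (0:ℝ) < 1 - t := by
        have := lt_of_le_of_lt ht.2 hx1; linarith
      exact ne_of_gt (mul_pos (Real.rpow_pos_of_pos (hWpos t ht) p) h1)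
  set K : ℝ → ℝ := fun s => ∫ t in (0:ℝ)..s, g t with hKdef
  -- Key estimate: K s ≤ A / (W s)^p
  have hK : ∀ s ∈ Set.Icc (0:ℝ) x, K s ≤ A / (W s) ^ p := by
    intro s hs
    have hs0 : 0 ≤ s := hs.1
    have hs1 : s < 1 := lt_of_le_of_lt hs.2 hx1
    have hbpos : (0:ℝ) < 1 - s := by linarith
    have hWs : 0 < W s := hWpos s hs
    have hWsp : 0 < (W s) ^ p := Real.rpow_pos_of_pos hWs p
    -- pointwise bound on the integrand
    have hpt : ∀ t ∈ Set.Icc (0:ℝ) s,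
        g t ≤ (C' ^ p / (W s) ^ p) * ((1-s) ^ q * (1-t) ^ (-q-1)) := by
      intro t ht
      have ht0 : 0 ≤ t := ht.1
      have hts : t ≤ s := ht.2
      have hapos : (0:ℝ) < 1 - t := by linarith
      have hWt : 0 < W t := hWpos t ⟨ht0, hts.trans hs.2⟩
      have hWtp : 0 < (W t) ^ p := Real.rpow_pos_of_pos hWt p
      have hratio : (0:ℝ) < (1-s)/(1-t) := div_pos hbpos hapos
      have h2 : (W s) ^ p ≤ (C' * ((1-s)/(1-t)) ^ γ * W t) ^ p :=
        Real.rpow_le_rpow hWs.le (hDd t s ht0 hts hs1) hp0.le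
      have h3 : (C' * ((1-s)/(1-t)) ^ γ * W t) ^ p
          = C' ^ p * ((1-s)/(1-t)) ^ q * (W t) ^ p := by
        rw [Real.mul_rpow (mul_nonneg hC'.le (Real.rpow_nonneg hratio.le γ)) hWt.le,
          Real.mul_rpow hC'.le (Real.rpow_nonneg hratio.le γ), hqdef,
          Real.rpow_mul hratio.le]
      have h4 : (W s) ^ p ≤ C' ^ p * ((1-s)/(1-t)) ^ q * (W t) ^ p := h3 ▸ h2
      have e1 : (1-t) ^ (-q-1) * (1-t) = (1-t) ^ (-q) := by
        nth_rewrite 2 [← Real.rpow_one (1-t)]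
        rw [← Real.rpow_add hapos]
        norm_num
      have e2 : (1-s) ^ q * (1-t) ^ (-q) = ((1-s)/(1-t)) ^ q := by
        rw [Real.div_rpow hbpos.le hapos.le, Real.rpow_neg hapos.le, div_eq_mul_inv]
      have hD : (0:ℝ) < (W t) ^ p * (1 - t) := mul_pos hWtp hapos
      have e3 : (C' ^ p / (W s) ^ p) * ((1-s) ^ q * (1-t) ^ (-q-1)) * ((W t) ^ p * (1-t))
          = (C' ^ p * ((1-s)/(1-t)) ^ q * (W t) ^ p) / (W s) ^ p := by
        rw [← e2, ← e1]; ring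
      have : g t = 1 / ((W t) ^ p * (1 - t)) := rfl
      rw [this, div_le_iff₀ hD, e3]
      exact (one_le_div hWsp).mpr h4
    -- integrate the bound
    have hIccsub : Set.Icc (0:ℝ) s ⊆ Set.Icc (0:ℝ) x := Set.Icc_subset_Icc le_rfl hs.2
    have hgii : IntervalIntegrable g volume 0 s := by
      apply ContinuousOn.intervalIntegrable
      rw [Set.uIcc_of_le hs0]
      exact hgcont.mono hIccsub
    have hbii : IntervalIntegrable
        (fun t => (C' ^ p / (W s) ^ p) * ((1-s) ^ q * (1-t) ^ (-q-1))) volume 0 s := by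
      apply ContinuousOn.intervalIntegrable
      rw [Set.uIcc_of_le hs0]
      apply ContinuousOn.mul continuousOn_const
      apply ContinuousOn.mul continuousOn_const
      apply ContinuousOn.rpow_const (continuousOn_const.sub continuousOn_id)
      intro t ht
      have hts : t ≤ s := ht.2
      have h1t : (0:ℝ) < 1 - t := by linarith
      exact Or.inl (by simpa using ne_of_gt h1t)
    have hKle : K s ≤ ∫ t in (0:ℝ)..s,
        (C' ^ p / (W s) ^ p) * ((1-s) ^ q * (1-t) ^ (-q-1)) :=
      intervalIntegral.integral_mono_on hs0 hgii hbii hpt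
    -- compute the bound integral
    have hIval : (∫ t in (0:ℝ)..s, (1-t) ^ (-q-1))
        = ((1-s) ^ (-q) - 1) / q := by
      have h5 : (∫ t in (0:ℝ)..s, (1-t) ^ (-q-1))
          = ∫ u in (1-s)..(1-(0:ℝ)), u ^ (-q-1) :=
        intervalIntegral.integral_comp_sub_left (fun u => u ^ (-q-1)) 1
      rw [h5]
      norm_num
      rw [integral_rpow (Or.inr ⟨by intro h; linarith,
        by rw [Set.uIcc_of_le (by linarith : 1 - s ≤ 1)]; intro h;
           simp only [Set.mem_Icc] at h; linarith⟩)]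
      have he : -q - 1 + 1 = -q := by ring
      rw [he, Real.one_rpow]
      rw [div_eq_div_iff (by intro h; linarith) (by intro h; linarith)]
      ring
    have hIbd : (1-s) ^ q * (((1-s) ^ (-q) - 1) / q) ≤ 1 / q := by
      have hbq : (0:ℝ) < (1-s) ^ q := Real.rpow_pos_of_pos hbpos q
      have hb1 : (1-s) ^ q * (1-s) ^ (-q) = 1 := by
        rw [← Real.rpow_add hbpos]; norm_num
      have he1 : (1-s) ^ q * (((1-s) ^ (-q) - 1) / q)
          = ((1-s) ^ q * (1-s) ^ (-q) - (1-s) ^ q) * (1/q) := by ring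
      rw [he1, hb1]
      have h2 := mul_le_mul_of_nonneg_right (by linarith : (1 - (1-s) ^ q : ℝ) ≤ 1)
        (one_div_nonneg.mpr hq.le)
      linarith [h2]
    have hcm : (∫ t in (0:ℝ)..s, C' ^ p / W s ^ p * ((1 - s) ^ q * (1 - t) ^ (-q - 1)))
        = (C' ^ p / W s ^ p * (1 - s) ^ q) * ∫ t in (0:ℝ)..s, (1 - t) ^ (-q - 1) := by
      rw [← intervalIntegral.integral_const_mul]
      congr 1
      funext t
      ring
    calc K s ≤ ∫ t in (0:ℝ)..s, C' ^ p / W s ^ p * ((1-s) ^ q * (1-t) ^ (-q-1)) := hKle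
      _ = (C' ^ p / W s ^ p * (1 - s) ^ q) * (((1-s) ^ (-q) - 1) / q) := by rw [hcm, hIval]
      _ = (C' ^ p / W s ^ p) * ((1-s) ^ q * (((1-s) ^ (-q) - 1) / q)) := by ring
      _ ≤ (C' ^ p / W s ^ p) * (1 / q) :=
          mul_le_mul_of_nonneg_left hIbd (le_of_lt (div_pos hCp hWsp))
      _ = A / (W s) ^ p := by rw [hAdef]; ring
  -- continuity / integrability facts on [0, x]
  have hEcont : ContinuousOn (what η) (Set.Icc 0 x) :=
    (what_continuousOn hηint).mono (Set.Icc_subset_Icc le_rfl hx1.le)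
  have hguicc : IntegrableOn g (Set.uIcc 0 x) := by
    rw [Set.uIcc_of_le hx0]; exact hgcont.integrableOn_Icc
  have hKcont : ContinuousOn K (Set.Icc 0 x) := by
    have := intervalIntegral.continuousOn_primitive_interval hguicc
    rwa [Set.uIcc_of_le hx0] at this
  have hηii : IntervalIntegrable η volume 0 x := what_intInt hηint le_rfl hx0 hx1.le
  have hEx0 : 0 ≤ what η x := (hηpos x ⟨hx0, hx1⟩).le
  -- split the integrand
  have hPcont : ContinuousOn (fun t => ∫ s in t..x, η s) (Set.Icc 0 x) := by
    have hηuicc : IntegrableOn η (Set.uIcc 0 x) := by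
      rw [Set.uIcc_of_le hx0]
      exact ((integrableOn_Icc_iff_integrableOn_Ico).2 hηint).mono_set
        (Set.Icc_subset_Icc le_rfl hx1.le)
    have := intervalIntegral.continuousOn_primitive_interval_left hηuicc
    rwa [Set.uIcc_of_le hx0] at this
  have hF1cont : ContinuousOn (fun t => (∫ s in t..x, η s) * g t) (Set.Icc 0 x) :=
    hPcont.mul hgcont
  have hF1ii : IntervalIntegrable (fun t => (∫ s in t..x, η s) * g t) volume 0 x := by
    apply ContinuousOn.intervalIntegrable
    rwa [Set.uIcc_of_le hx0]
  have hF2ii : IntervalIntegrable (fun t => what η x * g t) volume 0 x := by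
    apply ContinuousOn.intervalIntegrable
    rw [Set.uIcc_of_le hx0]
    exact continuousOn_const.mul hgcont
  have hsplit : (∫ t in (0:ℝ)..x, what η t / ((W t) ^ p * (1 - t)))
      = (∫ t in (0:ℝ)..x, (∫ s in t..x, η s) * g t) + what η x * K x := by
    have h1 : (∫ t in (0:ℝ)..x, what η t / ((W t) ^ p * (1 - t)))
        = ∫ t in (0:ℝ)..x, ((∫ s in t..x, η s) * g t + what η x * g t) := by
      apply intervalIntegral.integral_congr
      intro t ht
      rw [Set.uIcc_of_le hx0] at ht
      have hsp : what η t = (∫ s in t..x, η s) + what η x :=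
        what_split hηint ht.1 ht.2 hx1.le
      show what η t / ((W t) ^ p * (1 - t)) = _
      rw [hsp]
      simp only [hgdef]
      ring
    rw [h1, intervalIntegral.integral_add hF1ii hF2ii,
      intervalIntegral.integral_const_mul]
  -- Fubini
  have hfub : (∫ t in (0:ℝ)..x, (∫ s in t..x, η s) * g t)
      = ∫ s in (0:ℝ)..x, η s * K s := by
    have hgint : IntegrableOn g (Set.Ioc 0 x) :=
      hgcont.integrableOn_Icc.mono_set Set.Ioc_subset_Icc_self
    have hηint' : IntegrableOn η (Set.Ioc 0 x) :=
      hηint.mono_set (fun u hu => ⟨le_of_lt hu.1, lt_of_le_of_lt hu.2 hx1⟩)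
    set μ := volume.restrict (Set.Ioc (0:ℝ) x) with hμ
    set F : ℝ → ℝ → ℝ := fun t s => Set.indicator (Set.Ioi t) η s * g t with hFdef
    have hFeq : Function.uncurry F
        = Set.indicator {z : ℝ × ℝ | z.1 < z.2} (fun z => g z.1 * η z.2) := by
      funext z
      rcases z with ⟨t, s⟩
      by_cases h : t < s <;>
        simp [Function.uncurry, F, Set.indicator, h, Set.mem_Ioi, mul_comm]
    have hFint : Integrable (Function.uncurry F) (μ.prod μ) := by
      rw [hFeq]
      exact (Integrable.mul_prod hgint hηint').indicator
        (measurableSet_lt measurable_fst measurable_snd)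
    have hswap := MeasureTheory.integral_integral_swap hFint
    have hL : (∫ t, (∫ s, F t s ∂μ) ∂μ) = ∫ t in (0:ℝ)..x, (∫ s in t..x, η s) * g t := by
      rw [intervalIntegral.integral_of_le hx0]
      apply setIntegral_congr_fun measurableSet_Ioc
      intro t ht
      have hinter : Set.Ioc (0:ℝ) x ∩ Set.Ioi t = Set.Ioc t x := by
        ext u
        simp only [Set.mem_inter_iff, Set.mem_Ioc, Set.mem_Ioi]
        constructor
        · rintro ⟨⟨_, h2⟩, h3⟩; exact ⟨h3, h2⟩
        · rintro ⟨h1, h2⟩; exact ⟨⟨ht.1.trans h1, h2⟩, h1⟩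
      calc (∫ s, F t s ∂μ) = (∫ s in Set.Ioc (0:ℝ) x, Set.indicator (Set.Ioi t) η s) * g t := by
            rw [hμ]; exact integral_mul_const _ _
        _ = (∫ s in Set.Ioc (0:ℝ) x ∩ Set.Ioi t, η s) * g t := by
            rw [setIntegral_indicator measurableSet_Ioi]
        _ = (∫ s in t..x, η s) * g t := by
            rw [hinter, intervalIntegral.integral_of_le ht.2]
    have hR : (∫ s, (∫ t, F t s ∂μ) ∂μ) = ∫ s in (0:ℝ)..x, η s * K s := by
      rw [intervalIntegral.integral_of_le hx0]
      apply setIntegral_congr_fun measurableSet_Ioc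
      intro s hs
      have hFalt : ∀ t, F t s = η s * Set.indicator (Set.Iio s) g t := by
        intro t
        by_cases h : t < s <;>
          simp [F, Set.indicator, h, Set.mem_Ioi, Set.mem_Iio]
      have hinter : Set.Ioc (0:ℝ) x ∩ Set.Iio s = Set.Ioo 0 s := by
        ext u
        simp only [Set.mem_inter_iff, Set.mem_Ioc, Set.mem_Ioo, Set.mem_Iio]
        constructor
        · rintro ⟨⟨h1, _⟩, h3⟩; exact ⟨h1, h3⟩
        · rintro ⟨h1, h2⟩; exact ⟨⟨h1, h2.le.trans hs.2⟩, h2⟩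
      calc (∫ t, F t s ∂μ) = η s * ∫ t in Set.Ioc (0:ℝ) x, Set.indicator (Set.Iio s) g t := by
            rw [hμ]
            simp only [hFalt]
            exact integral_const_mul _ _
        _ = η s * ∫ t in Set.Ioc (0:ℝ) x ∩ Set.Iio s, g t := by
            rw [setIntegral_indicator measurableSet_Iio]
        _ = η s * K s := by
            rw [hinter, ← integral_Ioc_eq_integral_Ioo]
            have : K s = ∫ t in Set.Ioc (0:ℝ) s, g t := intervalIntegral.integral_of_le hs.1.le
            rw [this]
    rw [← hL, ← hR, hswap]
  -- bound the two pieces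
  have hKAcont : ContinuousOn (fun s => A / (W s) ^ p) (Set.Icc 0 x) := by
    apply ContinuousOn.div continuousOn_const hWpcont
    exact fun t ht => ne_of_gt (Real.rpow_pos_of_pos (hWpos t ht) p)
  have hT1 : (∫ s in (0:ℝ)..x, η s * K s) ≤ ∫ s in (0:ℝ)..x, η s * (A / (W s) ^ p) := by
    apply intervalIntegral.integral_mono_on hx0
    · apply IntervalIntegrable.mul_continuousOn hηii
      rwa [Set.uIcc_of_le hx0]
    · apply IntervalIntegrable.mul_continuousOn hηii
      rwa [Set.uIcc_of_le hx0]
    · intro s hs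
      exact mul_le_mul_of_nonneg_left (hK s hs)
        (hηnn s ⟨hs.1, lt_of_le_of_lt hs.2 hx1⟩)
  have hT1' : (∫ s in (0:ℝ)..x, η s * (A / (W s) ^ p))
      = A * ∫ s in (0:ℝ)..x, η s / (W s) ^ p := by
    rw [← intervalIntegral.integral_const_mul]
    apply intervalIntegral.integral_congr
    intro s _
    show η s * (A / (W s) ^ p) = A * (η s / (W s) ^ p)
    ring
  have hT2 : what η x * K x ≤ A * (what η x / (W x) ^ p) := by
    have := mul_le_mul_of_nonneg_left (hK x ⟨hx0, le_rfl⟩) hEx0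
    calc what η x * K x ≤ what η x * (A / (W x) ^ p) := this
      _ = A * (what η x / (W x) ^ p) := by ring
  rw [hsplit, hfub]
  have hRHS : A * (what η x / (W x) ^ p + ∫ t in (0:ℝ)..x, η t / (W t) ^ p)
      = A * (what η x / (W x) ^ p) + A * ∫ t in (0:ℝ)..x, η t / (W t) ^ p := by ring
  calc (∫ s in (0:ℝ)..x, η s * K s) + what η x * K x
      ≤ (A * ∫ s in (0:ℝ)..x, η s / (W s) ^ p) + A * (what η x / (W x) ^ p) := by
        have := hT1.trans_eq hT1'
        linarith [this, hT2]
    _ = A * (what η x / (W x) ^ p + ∫ t in (0:ℝ)..x, η t / (W t) ^ p) := by ring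
end

section
/- Let 1 < p < ∞, let ω ∈ D̂ be a radial weight, and ν, η radial weights such that the maximal Bergman projection P⁺_ω(f)(z) = ∫_𝔻 f(ζ)|B^ω_z(ζ)|ω(ζ) dA(ζ) is bounded from L^p_ν to L^p_η. If ν vanishes on a set E ⊂ 𝔻 of positive measure, then ω vanishes almost everywhere on E. -/
open MeasureTheory Set Complex
open scoped ENNReal NNReal

/-- Moment `mom ω x = ∫_0^1 s^x ω(s) ds`. -/
noncomputable def mom (ω : ℝ → ℝ) (x : ℝ) : ℝ := ∫ s in (0:ℝ)..1, s ^ x * ω s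

/-- The Bergman kernel `B^ω_z(ζ) = Σ (ζ z̄)^n / (2 ω_{2n+1})`. -/
noncomputable def Bker (ω : ℝ → ℝ) (z ζ : ℂ) : ℂ :=
  ∑' n : ℕ, (ζ * (starRingEnd ℂ) z) ^ n / ((2 * mom ω (2 * n + 1) : ℝ) : ℂ)

/-- Normalized area measure `dA = dx dy / π` on `ℂ`. -/
noncomputable def dA : Measure ℂ := (ENNReal.ofReal Real.pi)⁻¹ • (volume : Measure ℂ)

/-!
Suppose `ω ∘ |·|` does not vanish a.e. on `E` and test the bound on `f = ∞ · 1_E`. The right-hand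
side is `0` because `ν = 0` on `E`. For `z` in the disc, `ζ ↦ B^ω_z(ζ)` is analytic on the disc
(the moment bound `ω_{2n+1} ≥ ρ^{2n+1} ω̂(ρ)` gives radius of convergence `≥ 1`) and
`B^ω_z(0) = 1 / (2 ω₁) ≠ 0`, so its zeros form a null set and `P⁺_ω f(z) = ∞`. Since `|·|` pushes
area measure on the disc forward to `2πr dr` on `(0, 1)` and `η̂(0) > 0`, the left-hand side is
`∞` as well, a contradiction.
-/

namespace Complex

theorem lintegral_comp_norm {g : ℝ → ℝ≥0∞} (hg : Measurable g) :
    ∫⁻ z : ℂ, g ‖z‖ =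
      ENNReal.ofReal (2 * Real.pi) * ∫⁻ r in Ioi (0:ℝ), ENNReal.ofReal r * g r :=
  calc ∫⁻ z : ℂ, g ‖z‖
      = ∫⁻ p in Ioi (0:ℝ) ×ˢ Ioo (-Real.pi) Real.pi, ENNReal.ofReal p.1 * g p.1 := by
        rw [← Complex.lintegral_comp_polarCoord_symm, polarCoord_target]
        refine setLIntegral_congr_fun (measurableSet_Ioi.prod measurableSet_Ioo) fun p hp => ?_
        rw [Complex.norm_polarCoord_symm, abs_of_pos hp.1, smul_eq_mul]
    _ = (∫⁻ r in Ioi (0:ℝ), ENNReal.ofReal r * g r) * ∫⁻ _ in Ioo (-Real.pi) Real.pi, 1 := by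
        rw [Measure.volume_eq_prod, ← Measure.prod_restrict, ← lintegral_prod_mul (by fun_prop)
          aemeasurable_const]
        simp
    _ = _ := by
        rw [setLIntegral_one, Real.volume_Ioo, mul_comm]
        ring_nf

theorem map_norm_volume :
    (volume : Measure ℂ).map (‖·‖) =
      (volume.restrict (Ioi (0:ℝ))).withDensity fun r => ENNReal.ofReal (2 * Real.pi * r) := by
  ext s hs
  have hpre : volume ((‖·‖ : ℂ → ℝ) ⁻¹' s) = ∫⁻ z : ℂ, s.indicator 1 ‖z‖ :=
    (lintegral_indicator_one (measurable_norm hs)).symm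
  rw [Measure.map_apply measurable_norm hs, hpre, lintegral_comp_norm (measurable_one.indicator hs),
    ← lintegral_const_mul _ (by fun_prop), withDensity_apply _ hs,
    ← lintegral_indicator hs]
  refine lintegral_congr fun r => ?_
  by_cases hr : r ∈ s <;> simp [hr, ← ENNReal.ofReal_mul, Real.pi_pos.le, mul_assoc]

theorem map_norm_volume_restrict_ball :
    (volume.restrict (Metric.ball (0:ℂ) 1)).map (‖·‖) =
      (volume.restrict (Ioo (0:ℝ) 1)).withDensity fun r => ENNReal.ofReal (2 * Real.pi * r) := by
  have hball : Metric.ball (0:ℂ) 1 = (‖·‖) ⁻¹' Iio 1 := by ext; simp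
  rw [hball, ← Measure.restrict_map measurable_norm measurableSet_Iio, map_norm_volume,
    restrict_withDensity measurableSet_Iio, Measure.restrict_restrict measurableSet_Iio,
    Iio_inter_Ioi]

theorem quasiMeasurePreserving_norm_ball :
    Measure.QuasiMeasurePreserving (‖·‖) (volume.restrict (Metric.ball (0:ℂ) 1))
      (volume.restrict (Ioo (0:ℝ) 1)) :=
  ⟨measurable_norm, map_norm_volume_restrict_ball ▸ withDensity_absolutelyContinuous _ _⟩

theorem lintegral_ball_comp_norm_pos {g : ℝ → ℝ} (hg : 0 < ∫ r in Ioo (0:ℝ) 1, g r) :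
    0 < ∫⁻ z in Metric.ball (0:ℂ) 1, ENNReal.ofReal (g ‖z‖) := by
  have hmeas : AEMeasurable (fun r => ENNReal.ofReal (g r)) (volume.restrict (Ioo (0:ℝ) 1)) :=
    (Integrable.of_integral_ne_zero hg.ne').aemeasurable.ennreal_ofReal
  have hac : volume.restrict (Ioo (0:ℝ) 1) ≪
      (volume.restrict (Ioo (0:ℝ) 1)).withDensity fun r => ENNReal.ofReal (2 * Real.pi * r) :=
    withDensity_absolutelyContinuous' (by fun_prop) <|
      (ae_restrict_mem measurableSet_Ioo).mono fun r hr => by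
        simpa using mul_pos Real.two_pi_pos hr.1
  rw [pos_iff_ne_zero, ← lintegral_map' (hmeas.mono_ac quasiMeasurePreserving_norm_ball.2)
    measurable_norm.aemeasurable, map_norm_volume_restrict_ball,
    Ne, lintegral_eq_zero_iff' (hmeas.mono_ac (withDensity_absolutelyContinuous _ _))]
  intro h0
  have hnonpos : ∀ᵐ r ∂volume.restrict (Ioo (0:ℝ) 1), g r ≤ 0 :=
    (hac.ae_eq h0).mono fun r hr => by simpa using hr
  exact (integral_nonpos_of_ae hnonpos).not_gt hg

end Complex

open FormalMultilinearSeries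

lemma what_eq_setIntegral (ω : ℝ → ℝ) {r : ℝ} (hr : r ≤ 1) :
    what ω r = ∫ s in Ioo r 1, ω s := by
  rw [what, intervalIntegral.integral_of_le hr, setIntegral_congr_set Ioo_ae_eq_Ioc]

lemma mom_eq_setIntegral (ω : ℝ → ℝ) (x : ℝ) : mom ω x = ∫ s in Ioo 0 1, s ^ x * ω s := by
  rw [mom, intervalIntegral.integral_of_le zero_le_one, setIntegral_congr_set Ioo_ae_eq_Ioc]

lemma rpow_mul_what_le_mom {ω : ℝ → ℝ} (hωint : IntegrableOn ω (Ico 0 1))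
    (hωnn : ∀ r ∈ Ico (0:ℝ) 1, 0 ≤ ω r) {ρ x : ℝ} (hρ0 : 0 ≤ ρ) (hρ1 : ρ ≤ 1) (hx : 0 ≤ x) :
    ρ ^ x * what ω ρ ≤ mom ω x := by
  have hρsub : Ioo ρ 1 ⊆ Ioo 0 1 := Ioo_subset_Ioo_left hρ0
  have hω : IntegrableOn ω (Ioo 0 1) := hωint.mono_set Ioo_subset_Ico_self
  have hmom : IntegrableOn (fun s => s ^ x * ω s) (Ioo 0 1) :=
    (((integrableOn_Icc_iff_integrableOn_Ico (by simp)).2 hωint).continuousOn_mul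
      (Real.continuous_rpow_const hx).continuousOn isCompact_Icc).mono_set Ioo_subset_Icc_self
  rw [what_eq_setIntegral ω hρ1, mom_eq_setIntegral, ← integral_const_mul]
  calc ∫ s in Ioo ρ 1, ρ ^ x * ω s
      ≤ ∫ s in Ioo ρ 1, s ^ x * ω s :=
        setIntegral_mono_on ((hω.mono_set hρsub).const_mul _) (hmom.mono_set hρsub)
          measurableSet_Ioo fun s hs => mul_le_mul_of_nonneg_right
            (Real.rpow_le_rpow hρ0 hs.1.le hx) (hωnn s ⟨hρ0.trans hs.1.le, hs.2⟩)
    _ ≤ ∫ s in Ioo 0 1, s ^ x * ω s :=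
        setIntegral_mono_set hmom
          ((ae_restrict_mem measurableSet_Ioo).mono fun s hs =>
            mul_nonneg (Real.rpow_nonneg hs.1.le x) (hωnn s (Ioo_subset_Ico_self hs)))
          hρsub.eventuallyLE

lemma mom_pos {ω : ℝ → ℝ} (hωint : IntegrableOn ω (Ico 0 1))
    (hωnn : ∀ r ∈ Ico (0:ℝ) 1, 0 ≤ ω r) {ρ x : ℝ} (hρ0 : 0 < ρ) (hρ1 : ρ ≤ 1)
    (hρ : 0 < what ω ρ) (hx : 0 ≤ x) : 0 < mom ω x :=
  (mul_pos (Real.rpow_pos_of_pos hρ0 x) hρ).trans_le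
    (rpow_mul_what_le_mom hωint hωnn hρ0.le hρ1 hx)

noncomputable def bergmanCoeff (ω : ℝ → ℝ) (n : ℕ) : ℂ := ((2 * mom ω (2 * n + 1) : ℝ) : ℂ)⁻¹

lemma Bker_eq_ofScalarsSum (ω : ℝ → ℝ) (z ζ : ℂ) :
    Bker ω z ζ = ofScalarsSum (bergmanCoeff ω) (ζ * (starRingEnd ℂ) z) := by
  simp only [Bker, ofScalarsSum_eq_tsum, bergmanCoeff, smul_eq_mul, div_eq_inv_mul]

lemma one_le_radius_bergmanCoeff {ω : ℝ → ℝ} (hωint : IntegrableOn ω (Ico 0 1))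
    (hωnn : ∀ r ∈ Ico (0:ℝ) 1, 0 ≤ ω r) (hωpos : ∀ r ∈ Ico (0:ℝ) 1, 0 < what ω r) :
    1 ≤ (ofScalars ℂ (bergmanCoeff ω)).radius := by
  refine ENNReal.le_of_forall_nnreal_lt fun r hr => ?_
  have hr1 : (r : ℝ) < 1 := by exact_mod_cast hr
  -- any `ρ < 1` with `r ≤ ρ²` works, since then `rⁿ / ρ^(2n+1) ≤ 1 / ρ`
  set ρ : ℝ := (1 + r) / 2 with hρ
  have hρ0 : 0 < ρ := by positivity
  have hρ1 : ρ < 1 := by linarith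
  have hρr : (r : ℝ) ≤ ρ ^ 2 := by nlinarith [sq_nonneg (1 - (r : ℝ))]
  have hW : 0 < what ω ρ := hωpos ρ ⟨hρ0.le, hρ1⟩
  refine le_radius_of_bound _ ((2 * ρ * what ω ρ)⁻¹) fun n => ?_
  have hmom : ρ ^ (2 * n + 1) * what ω ρ ≤ mom ω (2 * n + 1) := by
    simpa [← Real.rpow_natCast] using
      rpow_mul_what_le_mom hωint hωnn hρ0.le hρ1.le (x := 2 * n + 1) (by positivity)
  have hmom0 : 0 < ρ ^ (2 * n + 1) * what ω ρ := by positivity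
  rw [ofScalars_norm, bergmanCoeff, norm_inv, Complex.norm_real,
    Real.norm_of_nonneg (by linarith), ← div_eq_inv_mul]
  calc (r : ℝ) ^ n / (2 * mom ω (2 * n + 1))
      ≤ (ρ ^ 2) ^ n / (2 * (ρ ^ (2 * n + 1) * what ω ρ)) := by gcongr
    _ = (2 * ρ * what ω ρ)⁻¹ := by
        field_simp
        rw [← pow_mul, ← pow_succ']

lemma analyticOnNhd_ofScalarsSum_ball {c : ℕ → ℂ} (hc : 1 ≤ (ofScalars ℂ c).radius) :
    AnalyticOnNhd ℂ (ofScalarsSum (E := ℂ) c) (Metric.ball 0 1) := by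
  have hball : Metric.ball (0:ℂ) 1 = Metric.eball 0 1 := by
    rw [← Metric.eball_ofReal, ENNReal.ofReal_one]
  rw [hball]
  exact ((ofScalars ℂ c).hasFPowerSeriesOnBall (one_pos.trans_le hc)).analyticOnNhd.mono
    (Metric.eball_subset_eball hc)

section kernel

variable {ω : ℝ → ℝ} {z : ℂ}

lemma analyticOnNhd_Bker (hrad : 1 ≤ (ofScalars ℂ (bergmanCoeff ω)).radius) (hz : ‖z‖ ≤ 1) :
    AnalyticOnNhd ℂ (Bker ω z) (Metric.ball 0 1) := by
  have hBker : Bker ω z = ofScalarsSum (bergmanCoeff ω) ∘ fun ζ => ζ * (starRingEnd ℂ) z :=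
    funext (Bker_eq_ofScalarsSum ω z)
  rw [hBker]
  refine (analyticOnNhd_ofScalarsSum_ball hrad).comp (analyticOnNhd_id.mul analyticOnNhd_const)
    fun ζ hζ => ?_
  rw [mem_ball_zero_iff] at hζ ⊢
  rw [norm_mul, RCLike.norm_conj]
  exact (mul_le_of_le_one_right (norm_nonneg ζ) hz).trans_lt hζ

lemma ae_Bker_ne_zero (hrad : 1 ≤ (ofScalars ℂ (bergmanCoeff ω)).radius) (hmom : 0 < mom ω 1)
    (hz : ‖z‖ ≤ 1) : ∀ᵐ ζ ∂volume.restrict (Metric.ball (0:ℂ) 1), Bker ω z ζ ≠ 0 := by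
  have hBker0 : Bker ω z 0 ≠ 0 := by
    simpa [Bker_eq_ofScalarsSum, bergmanCoeff] using hmom.ne'
  refine ae_restrict_le_codiscreteWithin measurableSet_ball ?_
  refine ((analyticOnNhd_Bker hrad hz).eqOn_zero_or_eventually_ne_zero_of_preconnected
    (convex_ball 0 1).isPreconnected).resolve_left fun h => hBker0 ?_
  exact h (Metric.mem_ball_self one_pos)

lemma setLIntegral_Bker_mul_ne_zero (hrad : 1 ≤ (ofScalars ℂ (bergmanCoeff ω)).radius)
    (hmom : 0 < mom ω 1) (hz : ‖z‖ ≤ 1) {E : Set ℂ} (hE : E ⊆ Metric.ball 0 1)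
    (hω : AEMeasurable (fun ζ : ℂ => ω ‖ζ‖) (volume.restrict E))
    (hωE : ¬ ∀ᵐ ζ ∂volume.restrict E, ω ‖ζ‖ ≤ 0) :
    ∫⁻ ζ in E, ‖Bker ω z ζ‖₊ * ENNReal.ofReal (ω ‖ζ‖) ≠ 0 := by
  have hB : AEMeasurable (fun ζ => (‖Bker ω z ζ‖₊ : ℝ≥0∞)) (volume.restrict E) :=
    .mono_set hE ((analyticOnNhd_Bker hrad hz).continuousOn.aemeasurable
      measurableSet_ball).nnnorm.coe_nnreal_ennreal
  have hBω : AEMeasurable (fun ζ => (‖Bker ω z ζ‖₊ : ℝ≥0∞) * ENNReal.ofReal (ω ‖ζ‖))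
      (volume.restrict E) := hB.mul hω.ennreal_ofReal
  rw [Ne, lintegral_eq_zero_iff' hBω]
  refine fun h => hωE ?_
  filter_upwards [h, ae_restrict_of_ae_restrict_of_subset hE (ae_Bker_ne_zero hrad hmom hz)]
    with ζ h0 hne
  simpa [hne] using h0

end kernel

lemma setLIntegral_mul_eq_top {α : Type*} [MeasurableSpace α] {μ : Measure α} {s t : Set α}
    (ht : MeasurableSet t) (hts : t ⊆ s) {F g : α → ℝ≥0∞} (hF : ∀ x ∈ t, F x = ⊤)
    (hg : ∫⁻ x in t, g x ∂μ ≠ 0) : ∫⁻ x in s, F x * g x ∂μ = ⊤ :=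
  top_unique <| calc
    ⊤ = ⊤ * ∫⁻ x in t, g x ∂μ := (ENNReal.top_mul hg).symm
    _ ≤ ∫⁻ x in t, ⊤ * g x ∂μ := lintegral_const_mul_le _ _
    _ = ∫⁻ x in t, F x * g x ∂μ := setLIntegral_congr_fun ht fun x hx => by rw [hF x hx]
    _ ≤ ∫⁻ x in s, F x * g x ∂μ := lintegral_mono_set hts

lemma setLIntegral_dA (s : Set ℂ) (g : ℂ → ℝ≥0∞) :
    ∫⁻ z in s, g z ∂dA = (ENNReal.ofReal Real.pi)⁻¹ * ∫⁻ z in s, g z := by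
  rw [dA, Measure.restrict_smul, lintegral_smul_measure, smul_eq_mul]

theorem stmt_16_general (p : ℝ) (hp : 1 < p)
    (ω ν η : ℝ → ℝ)
    (hωint : IntegrableOn ω (Set.Ico (0:ℝ) 1))
    (hωnn : ∀ r ∈ Set.Ico (0:ℝ) 1, 0 ≤ ω r)
    (hωpos : ∀ r ∈ Set.Ico (0:ℝ) 1, 0 < what ω r)
    (hηpos : ∀ r ∈ Set.Ico (0:ℝ) 1, 0 < what η r)
    -- boundedness of the maximal Bergman projection `P⁺_ω : L^p_ν → L^p_η`
    (Cb : ℝ)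
    (hbdd : ∀ f : ℂ → ℝ≥0∞, Measurable f →
      (∫⁻ z in Metric.ball (0:ℂ) 1,
          (∫⁻ ζ in Metric.ball (0:ℂ) 1,
              f ζ * (‖Bker ω z ζ‖₊ : ℝ≥0∞) * ENNReal.ofReal (ω ‖ζ‖) ∂dA) ^ p *
            ENNReal.ofReal (η ‖z‖) ∂dA)
        ≤ ENNReal.ofReal Cb *
            ∫⁻ z in Metric.ball (0:ℂ) 1, f z ^ p * ENNReal.ofReal (ν ‖z‖) ∂dA)
    (E : Set ℂ) (hE : E ⊆ Metric.ball (0:ℂ) 1) (hEm : MeasurableSet E)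
    (hνzero : ∀ z ∈ E, ν ‖z‖ = 0) :
    ∀ᵐ z ∂(volume.restrict E), ω ‖z‖ = 0 := by
  suffices hω : ∀ᵐ ζ ∂volume.restrict E, ω ‖ζ‖ ≤ 0 by
    filter_upwards [hω, ae_restrict_mem hEm] with ζ hle hζ
    exact hle.antisymm (hωnn _ ⟨norm_nonneg ζ, mem_ball_zero_iff.1 (hE hζ)⟩)
  by_contra hωE
  have hp0 : 0 < p := zero_lt_one.trans hp
  have hπ : (ENNReal.ofReal Real.pi)⁻¹ ≠ 0 := by simp
  have hrad := one_le_radius_bergmanCoeff hωint hωnn hωpos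
  have hmom : 0 < mom ω 1 := mom_pos hωint hωnn one_half_pos one_half_lt_one.le
    (hωpos _ ⟨one_half_pos.le, one_half_lt_one⟩) zero_le_one
  have hωmeas : AEMeasurable (fun ζ : ℂ => ω ‖ζ‖) (volume.restrict E) :=
    ((hωint.aemeasurable.mono_set Ioo_subset_Ico_self).comp_quasiMeasurePreserving
      Complex.quasiMeasurePreserving_norm_ball).mono_set hE
  set f : ℂ → ℝ≥0∞ := E.indicator fun _ => ⊤
  have hinner (z : ℂ) (hz : z ∈ Metric.ball (0:ℂ) 1) :
      ∫⁻ ζ in Metric.ball (0:ℂ) 1, f ζ * ‖Bker ω z ζ‖₊ * ENNReal.ofReal (ω ‖ζ‖) = ⊤ := by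
    simpa only [mul_assoc] using setLIntegral_mul_eq_top hEm hE (fun ζ hζ => indicator_of_mem hζ _)
      (setLIntegral_Bker_mul_ne_zero hrad hmom (mem_ball_zero_iff.1 hz).le hE hωmeas hωE)
  have hLHS : ∫⁻ z in Metric.ball (0:ℂ) 1,
      ((ENNReal.ofReal Real.pi)⁻¹ *
        ∫⁻ ζ in Metric.ball (0:ℂ) 1, f ζ * ‖Bker ω z ζ‖₊ * ENNReal.ofReal (ω ‖ζ‖)) ^ p *
      ENNReal.ofReal (η ‖z‖) = ⊤ :=
    setLIntegral_mul_eq_top measurableSet_ball subset_rfl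
      (fun z hz => by rw [hinner z hz, ENNReal.mul_top hπ, ENNReal.top_rpow_of_pos hp0])
      (Complex.lintegral_ball_comp_norm_pos
        (what_eq_setIntegral η zero_le_one ▸ hηpos 0 (by simp))).ne'
  have hRHS : ∫⁻ z in Metric.ball (0:ℂ) 1, f z ^ p * ENNReal.ofReal (ν ‖z‖) = 0 := by
    refine (lintegral_congr fun z => ?_).trans lintegral_zero
    by_cases hz : z ∈ E
    · simp [hνzero z hz]
    · simp [f, hz, ENNReal.zero_rpow_of_pos hp0]
  have hbddf := hbdd f (measurable_const.indicator hEm)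
  simp only [setLIntegral_dA] at hbddf
  rw [hLHS, hRHS, ENNReal.mul_top hπ, mul_zero, mul_zero] at hbddf
  exact ENNReal.top_ne_zero (le_zero_iff.1 hbddf)

theorem stmt_16 (p : ℝ) (hp : 1 < p)
    (ω ν η : ℝ → ℝ)
    (hωint : IntegrableOn ω (Set.Ico (0:ℝ) 1))
    (hνint : IntegrableOn ν (Set.Ico (0:ℝ) 1))
    (hηint : IntegrableOn η (Set.Ico (0:ℝ) 1))
    (hωnn : ∀ r ∈ Set.Ico (0:ℝ) 1, 0 ≤ ω r)
    (hνnn : ∀ r ∈ Set.Ico (0:ℝ) 1, 0 ≤ ν r)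
    (hηnn : ∀ r ∈ Set.Ico (0:ℝ) 1, 0 ≤ η r)
    (hωpos : ∀ r ∈ Set.Ico (0:ℝ) 1, 0 < what ω r)
    (hηpos : ∀ r ∈ Set.Ico (0:ℝ) 1, 0 < what η r)
    (C₁ : ℝ) (hC₁ : 1 < C₁)
    (hωDD : ∀ r ∈ Set.Ico (0:ℝ) 1, what ω r ≤ C₁ * what ω ((1 + r) / 2))
    -- boundedness of the maximal Bergman projection `P⁺_ω : L^p_ν → L^p_η`
    (Cb : ℝ) (hCb : 0 < Cb)
    (hbdd : ∀ f : ℂ → ℝ≥0∞, Measurable f →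
      (∫⁻ z in Metric.ball (0:ℂ) 1,
          (∫⁻ ζ in Metric.ball (0:ℂ) 1,
              f ζ * (‖Bker ω z ζ‖₊ : ℝ≥0∞) * ENNReal.ofReal (ω ‖ζ‖) ∂dA) ^ p *
            ENNReal.ofReal (η ‖z‖) ∂dA)
        ≤ ENNReal.ofReal Cb *
            ∫⁻ z in Metric.ball (0:ℂ) 1, f z ^ p * ENNReal.ofReal (ν ‖z‖) ∂dA)
    (E : Set ℂ) (hE : E ⊆ Metric.ball (0:ℂ) 1) (hEm : MeasurableSet E)
    (hEpos : 0 < volume E)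
    (hνzero : ∀ z ∈ E, ν ‖z‖ = 0) :
    ∀ᵐ z ∂(volume.restrict E), ω ‖z‖ = 0 :=
  stmt_16_general p hp ω ν η hωint hωnn hωpos hηpos Cb hbdd E hE hEm hνzero
end
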